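/- arXiv:2404.01821 — 4 statements merged into one kernel-verified Lean document; each statement's English description precedes it below -/
import Mathlib

section
/- For every positive integer N there exists a (necessarily unique) ℂ-algebra homomorphism from the Brauer algebra B(n,N) to End(U^{⊗n}) sending s_k to P_k and t_k to Q_k for every k = 1,…,n−1; equivalently, the operators P_k, Q_k satisfy all the defining relations of B(n,N). -/
noncomputable section

open scoped BigOperators

/-- Index type for the generators of the Brauer algebra `B(n,N)`:
`Sum.inl` indexes the generators `s₁,…,s_{n-1}` and `Sum.inr` the
generators `t₁,…,t_{n-1}` (0-based internally). -/
abbrev BIdx (n : ℕ) := Fin (n - 1) ⊕ Fin (n - 1)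

/-- The generator `s_k` (1-based) in the free algebra. -/
def bS (n : ℕ) (k : ℕ) : FreeAlgebra ℂ (BIdx n) :=
  if h : 1 ≤ k ∧ k ≤ n - 1 then FreeAlgebra.ι ℂ (Sum.inl ⟨k - 1, by omega⟩) else 0

/-- The generator `t_k` (1-based) in the free algebra. -/
def bT (n : ℕ) (k : ℕ) : FreeAlgebra ℂ (BIdx n) :=
  if h : 1 ≤ k ∧ k ≤ n - 1 then FreeAlgebra.ι ℂ (Sum.inr ⟨k - 1, by omega⟩) else 0

/-- The defining relations of the Brauer algebra `B(n,N)`. -/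
inductive BrauerRel (n : ℕ) (N : ℂ) :
    FreeAlgebra ℂ (BIdx n) → FreeAlgebra ℂ (BIdx n) → Prop
  | s_sq (k : ℕ) (h : 1 ≤ k ∧ k ≤ n - 1) :
      BrauerRel n N (bS n k * bS n k) 1
  | t_sq (k : ℕ) (h : 1 ≤ k ∧ k ≤ n - 1) :
      BrauerRel n N (bT n k * bT n k) (N • bT n k)
  | st (k : ℕ) (h : 1 ≤ k ∧ k ≤ n - 1) :
      BrauerRel n N (bS n k * bT n k) (bT n k)
  | ts (k : ℕ) (h : 1 ≤ k ∧ k ≤ n - 1) :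
      BrauerRel n N (bT n k * bS n k) (bT n k)
  | braid (k : ℕ) (h : 1 ≤ k ∧ k + 1 ≤ n - 1) :
      BrauerRel n N (bS n k * bS n (k+1) * bS n k) (bS n (k+1) * bS n k * bS n (k+1))
  | ttt_lo (k : ℕ) (h : 1 ≤ k ∧ k + 1 ≤ n - 1) :
      BrauerRel n N (bT n k * bT n (k+1) * bT n k) (bT n k)
  | ttt_hi (k : ℕ) (h : 1 ≤ k ∧ k + 1 ≤ n - 1) :
      BrauerRel n N (bT n (k+1) * bT n k * bT n (k+1)) (bT n (k+1))
  | stt (k : ℕ) (h : 1 ≤ k ∧ k + 1 ≤ n - 1) :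
      BrauerRel n N (bS n k * bT n (k+1) * bT n k) (bS n (k+1) * bT n k)
  | tts (k : ℕ) (h : 1 ≤ k ∧ k + 1 ≤ n - 1) :
      BrauerRel n N (bT n (k+1) * bT n k * bS n (k+1)) (bT n (k+1) * bS n k)
  | ss_comm (k l : ℕ)
      (h : 1 ≤ k ∧ k ≤ n - 1 ∧ 1 ≤ l ∧ l ≤ n - 1 ∧ (k + 1 < l ∨ l + 1 < k)) :
      BrauerRel n N (bS n k * bS n l) (bS n l * bS n k)
  | ts_comm (k l : ℕ)
      (h : 1 ≤ k ∧ k ≤ n - 1 ∧ 1 ≤ l ∧ l ≤ n - 1 ∧ (k + 1 < l ∨ l + 1 < k)) :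
      BrauerRel n N (bT n k * bS n l) (bS n l * bT n k)
  | tt_comm (k l : ℕ)
      (h : 1 ≤ k ∧ k ≤ n - 1 ∧ 1 ≤ l ∧ l ≤ n - 1 ∧ (k + 1 < l ∨ l + 1 < k)) :
      BrauerRel n N (bT n k * bT n l) (bT n l * bT n k)

/-- The Brauer algebra `B(n,N)`. -/
abbrev BrauerAlgebra (n : ℕ) (N : ℂ) := RingQuot (BrauerRel n N)

/-- The generator `s_k` (1-based) of `B(n,N)`. -/
def sB (n : ℕ) (N : ℂ) (k : ℕ) : BrauerAlgebra n N :=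
  RingQuot.mkAlgHom ℂ (BrauerRel n N) (bS n k)

/-- The generator `t_k` (1-based) of `B(n,N)`. -/
def tB (n : ℕ) (N : ℂ) (k : ℕ) : BrauerAlgebra n N :=
  RingQuot.mkAlgHom ℂ (BrauerRel n N) (bT n k)

/-- The endomorphism algebra of `U^{⊗n}` for `U = ℂ^N`, realized as matrices
with rows and columns indexed by the multi-indices of the standard basis
`e_{i₁} ⊗ ⋯ ⊗ e_{iₙ}` of `U^{⊗n}`. -/
abbrev TEnd (n N : ℕ) := Matrix (Fin n → Fin N) (Fin n → Fin N) ℂ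

/-- The endomorphism `P_{kl}` of `U^{⊗n}` transposing the `k`-th and `l`-th
tensor factors (0-based). -/
def Pmat (n N : ℕ) (k l : Fin n) : TEnd n N :=
  Matrix.of fun w v => if w = v ∘ Equiv.swap k l then 1 else 0

/-- The endomorphism `Q_{kl}` of `U^{⊗n}` acting as the identity on all
factors except the `k`-th and `l`-th ones (0-based), and there by
`u ⊗ v ↦ (Σᵢ uᵢ vᵢ) · Σⱼ eⱼ ⊗ eⱼ`. -/
def Qmat (n N : ℕ) (k l : Fin n) : TEnd n N :=
  Matrix.of fun w v =>
    if w k = w l ∧ v k = v l ∧ ∀ m, m ≠ k → m ≠ l → w m = v m then 1 else 0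

/-- `P_k = P_{k,k+1}` for the 1-based index `k = 1,…,n−1`. -/
def Pk (n N : ℕ) (k : ℕ) : TEnd n N :=
  if h : 1 ≤ k ∧ k + 1 ≤ n then Pmat n N ⟨k - 1, by omega⟩ ⟨k, by omega⟩ else 0

/-- `Q_k = Q_{k,k+1}` for the 1-based index `k = 1,…,n−1`. -/
def Qk (n N : ℕ) (k : ℕ) : TEnd n N :=
  if h : 1 ≤ k ∧ k + 1 ≤ n then Qmat n N ⟨k - 1, by omega⟩ ⟨k, by omega⟩ else 0

/-- The `n`-th tensor power `g^{⊗n}` of a matrix `g`, acting on `U^{⊗n}`. -/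
def tpow (n N : ℕ) (g : Matrix (Fin N) (Fin N) ℂ) : TEnd n N :=
  Matrix.of fun w v => ∏ k : Fin n, g (w k) (v k)

variable {n N : ℕ}

/-- permutation matrix -/
def Pperm (n N : ℕ) (σ : Equiv.Perm (Fin n)) : TEnd n N :=
  Matrix.of fun w v => if w = v ∘ σ then 1 else 0

lemma Pmat_eq (a b : Fin n) : Pmat n N a b = Pperm n N (Equiv.swap a b) := rfl

lemma Pperm_one : Pperm n N 1 = 1 := by
  ext w v
  simp [Pperm, Matrix.one_apply, eq_comm]

lemma Pperm_mul_apply (σ : Equiv.Perm (Fin n)) (M : TEnd n N) (w v) :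
    (Pperm n N σ * M) w v = M (w ∘ σ.symm) v := by
  rw [Matrix.mul_apply]
  have key : ∀ u : Fin n → Fin N, Pperm n N σ w u = if u = w ∘ σ.symm then 1 else 0 := by
    intro u
    simp only [Pperm, Matrix.of_apply]
    congr 1
    simp only [eq_iff_iff]
    constructor
    · rintro rfl; ext m; simp
    · rintro rfl; ext m; simp
  simp only [key, ite_mul, one_mul, zero_mul]
  simp
lemma mul_Pperm_apply (M : TEnd n N) (σ : Equiv.Perm (Fin n)) (w v) :
    (M * Pperm n N σ) w v = M w (v ∘ σ) := by
  rw [Matrix.mul_apply]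
  simp only [Pperm, Matrix.of_apply, mul_ite, mul_one, mul_zero]
  simp

lemma Pperm_mul (σ τ : Equiv.Perm (Fin n)) :
    Pperm n N σ * Pperm n N τ = Pperm n N (τ * σ) := by
  ext w v
  rw [Pperm_mul_apply]
  simp only [Pperm, Matrix.of_apply]
  congr 1
  simp only [eq_iff_iff]
  constructor
  · intro h; funext m
    have := congrFun h (σ m)
    simpa using this
  · rintro rfl; ext m; simp [Equiv.Perm.mul_apply]

/-- the set of `u` matching `w` off `{a,b}` and constant on `{a,b}` -/
lemma filter_eq_image {a b : Fin n} (hab : a ≠ b) (w : Fin n → Fin N) :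
    Finset.univ.filter (fun u : Fin n → Fin N =>
        u a = u b ∧ ∀ m, m ≠ a → m ≠ b → u m = w m)
      = Finset.univ.image (fun j : Fin N => fun m => if m = a ∨ m = b then j else w m) := by
  ext u
  simp only [Finset.mem_filter, Finset.mem_image, Finset.mem_univ, true_and]
  constructor
  · rintro ⟨h1, h2⟩
    refine ⟨u a, ?_⟩
    funext m
    by_cases hma : m = a
    · subst hma; simp
    by_cases hmb : m = b
    · subst hmb; simp [h1.symm]
    simp [hma, hmb, h2 m hma hmb]
  · rintro ⟨j, rfl⟩
    refine ⟨by simp, fun m hma hmb => by simp [hma, hmb]⟩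

lemma Wfun_injective {a b : Fin n} (w : Fin n → Fin N) :
    Function.Injective (fun j : Fin N => fun m => if m = a ∨ m = b then j else w m) := by
  intro j j' h
  have := congrFun h a
  simpa using this

lemma Qmat_mul_apply {a b : Fin n} (hab : a ≠ b) (M : TEnd n N) (w v) :
    (Qmat n N a b * M) w v =
      if w a = w b then
        ∑ j : Fin N, M (fun m => if m = a ∨ m = b then j else w m) v
      else 0 := by
  rw [Matrix.mul_apply]
  simp only [Qmat, Matrix.of_apply, ite_mul, one_mul, zero_mul]
  by_cases h : w a = w b
  · rw [if_pos h]
    have hcond : ∀ u : Fin n → Fin N,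
        ((w a = w b ∧ u a = u b ∧ ∀ m, m ≠ a → m ≠ b → w m = u m)) ↔
          (u a = u b ∧ ∀ m, m ≠ a → m ≠ b → u m = w m) := by
      intro u
      rw [and_iff_right h]
      constructor
      · rintro ⟨h1, h2⟩; exact ⟨h1, fun m hma hmb => (h2 m hma hmb).symm⟩
      · rintro ⟨h1, h2⟩; exact ⟨h1, fun m hma hmb => (h2 m hma hmb).symm⟩
    simp only [hcond]
    rw [← Finset.sum_filter, filter_eq_image hab, Finset.sum_image
      (fun j _ j' _ hjj => Wfun_injective w hjj)]
  · rw [if_neg h]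
    apply Finset.sum_eq_zero
    intro u _
    rw [if_neg]
    tauto

lemma mul_Qmat_apply {a b : Fin n} (hab : a ≠ b) (M : TEnd n N) (w v) :
    (M * Qmat n N a b) w v =
      if v a = v b then
        ∑ j : Fin N, M w (fun m => if m = a ∨ m = b then j else v m)
      else 0 := by
  rw [Matrix.mul_apply]
  simp only [Qmat, Matrix.of_apply, mul_ite, mul_one, mul_zero]
  by_cases h : v a = v b
  · rw [if_pos h]
    have hcond : ∀ u : Fin n → Fin N,
        ((u a = u b ∧ v a = v b ∧ ∀ m, m ≠ a → m ≠ b → u m = v m)) ↔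
          (u a = u b ∧ ∀ m, m ≠ a → m ≠ b → u m = v m) := by
      intro u
      constructor
      · rintro ⟨h1, _, h2⟩; exact ⟨h1, h2⟩
      · rintro ⟨h1, h2⟩; exact ⟨h1, h, h2⟩
    simp only [hcond]
    rw [← Finset.sum_filter, filter_eq_image hab, Finset.sum_image
      (fun j _ j' _ hjj => Wfun_injective v hjj)]
  · rw [if_neg h]
    apply Finset.sum_eq_zero
    intro u _
    rw [if_neg]
    tauto

open Equiv in
lemma PP_self (a b : Fin n) : Pmat n N a b * Pmat n N a b = 1 := by
  rw [Pmat_eq, Pperm_mul, swap_mul_self, Pperm_one]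

lemma Qmat_symm (a b : Fin n) : Qmat n N a b = Qmat n N b a := by
  ext w v
  simp only [Qmat, Matrix.of_apply]
  congr 1
  simp only [eq_iff_iff]
  constructor <;> (rintro ⟨h1, h2, h3⟩; exact ⟨h1.symm, h2.symm, fun m h h' => h3 m h' h⟩)

open Equiv in
lemma PQ_self {a b : Fin n} (hab : a ≠ b) : Pmat n N a b * Qmat n N a b = Qmat n N a b := by
  ext w v
  rw [Pmat_eq, Pperm_mul_apply]
  simp only [Qmat, Matrix.of_apply]
  congr 1
  simp only [eq_iff_iff, Function.comp_apply, symm_swap, swap_apply_left, swap_apply_right]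
  constructor
  · rintro ⟨h1, h2, h3⟩
    exact ⟨h1.symm, h2, fun m hma hmb => by
      simpa [swap_apply_of_ne_of_ne hma hmb] using h3 m hma hmb⟩
  · rintro ⟨h1, h2, h3⟩
    exact ⟨h1.symm, h2, fun m hma hmb => by
      simpa [swap_apply_of_ne_of_ne hma hmb] using h3 m hma hmb⟩

open Equiv in
lemma QP_self {a b : Fin n} (hab : a ≠ b) : Qmat n N a b * Pmat n N a b = Qmat n N a b := by
  ext w v
  rw [Pmat_eq, mul_Pperm_apply]
  simp only [Qmat, Matrix.of_apply]
  congr 1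
  simp only [eq_iff_iff, Function.comp_apply, swap_apply_left, swap_apply_right]
  constructor
  · rintro ⟨h1, h2, h3⟩
    exact ⟨h1, h2.symm, fun m hma hmb => by
      simpa [swap_apply_of_ne_of_ne hma hmb] using h3 m hma hmb⟩
  · rintro ⟨h1, h2, h3⟩
    exact ⟨h1, h2.symm, fun m hma hmb => by
      simpa [swap_apply_of_ne_of_ne hma hmb] using h3 m hma hmb⟩

lemma QQ_self {a b : Fin n} (hab : a ≠ b) :
    Qmat n N a b * Qmat n N a b = (N : ℂ) • Qmat n N a b := by
  ext w v
  rw [Qmat_mul_apply hab, Matrix.smul_apply]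
  by_cases h : w a = w b
  · rw [if_pos h]
    have key : ∀ j : Fin N,
        Qmat n N a b (fun m => if m = a ∨ m = b then j else w m) v
          = if v a = v b ∧ ∀ m, m ≠ a → m ≠ b → w m = v m then 1 else 0 := by
      intro j
      simp only [Qmat, Matrix.of_apply]
      congr 1
      simp only [eq_iff_iff]
      constructor
      · rintro ⟨-, h2, h3⟩
        exact ⟨h2, fun m hma hmb => by simpa [hma, hmb] using h3 m hma hmb⟩
      · rintro ⟨h2, h3⟩
        exact ⟨by simp, h2, fun m hma hmb => by simpa [hma, hmb] using h3 m hma hmb⟩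
    simp only [key]
    rw [Finset.sum_const, Finset.card_univ, Fintype.card_fin]
    simp [Qmat, h, smul_eq_mul]
  · rw [if_neg h]
    simp [Qmat, h]

open Equiv in
lemma braid_mat {a b c : Fin n} (hab : a ≠ b) (hbc : b ≠ c) (hac : a ≠ c) :
    Pmat n N a b * Pmat n N b c * Pmat n N a b
      = Pmat n N b c * Pmat n N a b * Pmat n N b c := by
  simp only [Pmat_eq, Pperm_mul]
  congr 1
  have h1 : Equiv.swap a b * (Equiv.swap b c * Equiv.swap a b) = Equiv.swap a c := by
    rw [← mul_assoc, swap_comm a b, swap_comm b c,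
      swap_mul_swap_mul_swap (Ne.symm hbc) (Ne.symm hac)]
  have h2 : Equiv.swap b c * (Equiv.swap a b * Equiv.swap b c) = Equiv.swap c a := by
    rw [← mul_assoc, swap_mul_swap_mul_swap hab hac]
  rw [h1, h2, swap_comm]

lemma sum_ite_eq_and (c : Fin N) (C : Prop) [Decidable C] :
    (∑ j : Fin N, if (j = c ∧ C) then (1:ℂ) else 0) = if C then 1 else 0 := by
  by_cases hC : C
  · simp [hC, Finset.sum_ite_eq']
  · simp [hC]

lemma QQ_adj {a b c : Fin n} (hab : a ≠ b) (hbc : b ≠ c) (hac : a ≠ c) :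
    Qmat n N b c * Qmat n N a b = Matrix.of fun w v =>
      if w b = w c ∧ v a = v b ∧ v c = w a ∧
          ∀ m, m ≠ a → m ≠ b → m ≠ c → w m = v m then 1 else 0 := by
  ext w v
  rw [Qmat_mul_apply hbc]
  by_cases h : w b = w c
  · rw [if_pos h]
    have key : ∀ j : Fin N,
        Qmat n N a b (fun m => if m = b ∨ m = c then j else w m) v
          = if j = w a ∧ (v a = v b ∧ v c = w a ∧
              ∀ m, m ≠ a → m ≠ b → m ≠ c → w m = v m) then 1 else 0 := by
      intro j
      simp only [Qmat, Matrix.of_apply]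
      congr 1
      simp only [eq_iff_iff, hab, hac, or_self, if_false]
      constructor
      · rintro ⟨h1, h2, h3⟩
        have hj : j = w a := by simpa using h1.symm
        have hc : j = v c := by simpa using h3 c hac.symm hbc.symm
        refine ⟨hj, h2, hc.symm.trans hj, ?_⟩
        intro m hma hmb hmc
        simpa [hmb, hmc] using h3 m hma hmb
      · rintro ⟨h1, h2, h3, h4⟩
        refine ⟨by simpa using h1.symm, h2, ?_⟩
        intro m hma hmb
        by_cases hmc : m = c
        · subst hmc; simp [h3, h1]
        · simpa [hmb, hmc] using h4 m hma hmb hmc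
    simp only [key]
    rw [sum_ite_eq_and]
    simp [Matrix.of_apply, h]
  · rw [if_neg h]
    simp [Matrix.of_apply, h]

lemma ttt_mat {a b c : Fin n} (hab : a ≠ b) (hbc : b ≠ c) (hac : a ≠ c) :
    Qmat n N a b * Qmat n N b c * Qmat n N a b = Qmat n N a b := by
  rw [mul_assoc]
  nth_rewrite 2 [Qmat_symm]
  rw [show Qmat n N c b * Qmat n N a b = Qmat n N b c * Qmat n N a b by rw [Qmat_symm]]
  rw [QQ_adj hab hbc hac]
  ext w v
  rw [Qmat_mul_apply hab]
  by_cases h : w a = w b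
  · rw [if_pos h]
    have key : ∀ j : Fin N,
        (Matrix.of fun w v =>
          if w b = w c ∧ v a = v b ∧ v c = w a ∧
              ∀ m, m ≠ a → m ≠ b → m ≠ c → w m = v m then (1:ℂ) else 0)
            (fun m => if m = a ∨ m = b then j else w m) v
          = if j = w c ∧ (v a = v b ∧ v c = w c ∧
              ∀ m, m ≠ a → m ≠ b → m ≠ c → w m = v m) then 1 else 0 := by
      intro j
      simp only [Matrix.of_apply]
      congr 1
      simp only [eq_iff_iff, hbc, hac.symm, hbc.symm, or_self, if_false]
      constructor
      · rintro ⟨h1, h2, h3, h4⟩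
        have hj : j = w c := by simpa [hbc, hac.symm, hbc.symm] using h1
        have h3' : v c = j := by simpa using h3
        refine ⟨hj, h2, by rw [h3', hj], ?_⟩
        intro m hma hmb hmc
        simpa [hma, hmb] using h4 m hma hmb hmc
      · rintro ⟨h1, h2, h3, h4⟩
        refine ⟨by simpa [hbc.symm] using h1, h2, by simpa using h3.trans h1.symm, ?_⟩
        intro m hma hmb hmc
        simpa [hma, hmb] using h4 m hma hmb hmc
    simp only [key]
    have hQ : Qmat n N a b w v
        = if (v a = v b ∧ v c = w c ∧
            ∀ m, m ≠ a → m ≠ b → m ≠ c → w m = v m) then 1 else 0 := by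
      simp only [Qmat, Matrix.of_apply]
      congr 1
      simp only [eq_iff_iff]
      constructor
      · rintro ⟨-, h2, h3⟩
        exact ⟨h2, (h3 c hac.symm hbc.symm).symm, fun m hma hmb _ => h3 m hma hmb⟩
      · rintro ⟨h2, h3, h4⟩
        refine ⟨h, h2, ?_⟩
        intro m hma hmb
        by_cases hmc : m = c
        · subst hmc; exact h3.symm
        · exact h4 m hma hmb hmc
    rw [sum_ite_eq_and, hQ]
  · rw [if_neg h]
    simp [Qmat, h]

open Equiv in
lemma stt_mat {a b c : Fin n} (hab : a ≠ b) (hbc : b ≠ c) (hac : a ≠ c) :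
    Pmat n N a b * (Qmat n N b c * Qmat n N a b) = Pmat n N b c * Qmat n N a b := by
  rw [QQ_adj hab hbc hac]
  ext w v
  rw [Pmat_eq a b, Pmat_eq b c, Pperm_mul_apply, Pperm_mul_apply]
  simp only [Matrix.of_apply, Qmat, symm_swap, Function.comp_apply, swap_apply_left,
    swap_apply_right, swap_apply_of_ne_of_ne (Ne.symm hac) (Ne.symm hbc),
    swap_apply_of_ne_of_ne hab hac]
  congr 1
  simp only [eq_iff_iff]
  constructor
  · rintro ⟨h1, h2, h3, h4⟩
    refine ⟨h1, h2, ?_⟩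
    intro m hma hmb
    by_cases hmc : m = c
    · subst hmc
      rw [swap_apply_right]
      exact h3.symm
    · rw [swap_apply_of_ne_of_ne hmb hmc]
      have := h4 m hma hmb hmc
      rwa [swap_apply_of_ne_of_ne hma hmb] at this
  · rintro ⟨h1, h2, h3⟩
    refine ⟨h1, h2, ?_, ?_⟩
    · have := h3 c hac.symm hbc.symm
      rw [swap_apply_right] at this
      exact this.symm
    · intro m hma hmb hmc
      rw [swap_apply_of_ne_of_ne hma hmb]
      have := h3 m hma hmb
      rwa [swap_apply_of_ne_of_ne hmb hmc] at this

open Equiv in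
lemma tts_mat {a b c : Fin n} (hab : a ≠ b) (hbc : b ≠ c) (hac : a ≠ c) :
    Qmat n N b c * Qmat n N a b * Pmat n N b c = Qmat n N b c * Pmat n N a b := by
  rw [QQ_adj hab hbc hac]
  ext w v
  rw [Pmat_eq a b, Pmat_eq b c, mul_Pperm_apply, mul_Pperm_apply]
  simp only [Matrix.of_apply, Qmat, Function.comp_apply, swap_apply_left,
    swap_apply_right, swap_apply_of_ne_of_ne hab hac,
    swap_apply_of_ne_of_ne (Ne.symm hac) (Ne.symm hbc)]
  congr 1
  simp only [eq_iff_iff]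
  constructor
  · rintro ⟨h1, h2, h3, h4⟩
    refine ⟨h1, h2, ?_⟩
    intro m hmb hmc
    by_cases hma : m = a
    · subst hma
      rw [swap_apply_left]
      exact h3.symm
    · rw [swap_apply_of_ne_of_ne hma hmb]
      have := h4 m hma hmb hmc
      rwa [swap_apply_of_ne_of_ne hmb hmc] at this
  · rintro ⟨h1, h2, h3⟩
    refine ⟨h1, h2, ?_, ?_⟩
    · have := h3 a hab hac
      rw [swap_apply_left] at this
      exact this.symm
    · intro m hma hmb hmc
      rw [swap_apply_of_ne_of_ne hmb hmc]
      have := h3 m hmb hmc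
      rwa [swap_apply_of_ne_of_ne hma hmb] at this

open Equiv in
lemma PP_comm {a b c d : Fin n} (hac : a ≠ c) (had : a ≠ d) (hbc : b ≠ c) (hbd : b ≠ d) :
    Pmat n N a b * Pmat n N c d = Pmat n N c d * Pmat n N a b := by
  simp only [Pmat_eq, Pperm_mul]
  have hd : (Equiv.swap a b).Disjoint (Equiv.swap c d) := by
    intro x
    by_cases hxa : x = a
    · subst hxa; right; exact swap_apply_of_ne_of_ne hac had
    by_cases hxb : x = b
    · subst hxb; right; exact swap_apply_of_ne_of_ne hbc hbd
    · left; exact swap_apply_of_ne_of_ne hxa hxb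
  rw [hd.commute.eq]

open Equiv in
lemma QP_comm {a b c d : Fin n} (hac : a ≠ c) (had : a ≠ d) (hbc : b ≠ c) (hbd : b ≠ d) :
    Qmat n N a b * Pmat n N c d = Pmat n N c d * Qmat n N a b := by
  ext w v
  rw [Pmat_eq, mul_Pperm_apply, Pperm_mul_apply]
  simp only [Qmat, Matrix.of_apply, symm_swap, Function.comp_apply,
    swap_apply_of_ne_of_ne hac had, swap_apply_of_ne_of_ne hbc hbd]
  congr 1
  simp only [eq_iff_iff]
  have hfix : ∀ x, x ≠ a → x ≠ b → Equiv.swap c d x ≠ a ∧ Equiv.swap c d x ≠ b := by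
    intro x hxa hxb
    constructor
    · intro e
      apply hxa
      have := congrArg (Equiv.swap c d) e
      rwa [swap_apply_self, swap_apply_of_ne_of_ne hac had] at this
    · intro e
      apply hxb
      have := congrArg (Equiv.swap c d) e
      rwa [swap_apply_self, swap_apply_of_ne_of_ne hbc hbd] at this
  constructor
  · rintro ⟨h1, h2, h3⟩
    refine ⟨h1, h2, ?_⟩
    intro m hma hmb
    obtain ⟨h4, h5⟩ := hfix m hma hmb
    have := h3 (Equiv.swap c d m) h4 h5
    rwa [swap_apply_self] at this
  · rintro ⟨h1, h2, h3⟩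
    refine ⟨h1, h2, ?_⟩
    intro m hma hmb
    obtain ⟨h4, h5⟩ := hfix m hma hmb
    have := h3 (Equiv.swap c d m) h4 h5
    rwa [swap_apply_self] at this

lemma QQ_disj {a b c d : Fin n} (hab : a ≠ b) (hcd : c ≠ d)
    (hac : a ≠ c) (had : a ≠ d) (hbc : b ≠ c) (hbd : b ≠ d) :
    Qmat n N a b * Qmat n N c d = Matrix.of fun w v =>
      if w a = w b ∧ w c = w d ∧ v a = v b ∧ v c = v d ∧
          ∀ m, m ≠ a → m ≠ b → m ≠ c → m ≠ d → w m = v m then 1 else 0 := by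
  ext w v
  rw [Qmat_mul_apply hab]
  by_cases h : w a = w b
  · rw [if_pos h]
    have key : ∀ j : Fin N,
        Qmat n N c d (fun m => if m = a ∨ m = b then j else w m) v
          = if j = v a ∧ (w c = w d ∧ v a = v b ∧ v c = v d ∧
              ∀ m, m ≠ a → m ≠ b → m ≠ c → m ≠ d → w m = v m) then 1 else 0 := by
      intro j
      simp only [Qmat, Matrix.of_apply]
      congr 1
      simp only [eq_iff_iff, hac.symm, hbc.symm, had.symm, hbd.symm, or_self, if_false]
      constructor
      · rintro ⟨h1, h2, h3⟩
        have ha : j = v a := by simpa using h3 a hac had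
        have hb : j = v b := by simpa using h3 b hbc hbd
        refine ⟨ha, by simpa [hac.symm, hbc.symm, had.symm, hbd.symm] using h1,
          ha.symm.trans hb, h2, ?_⟩
        intro m hma hmb hmc hmd
        simpa [hma, hmb] using h3 m hmc hmd
      · rintro ⟨h1, h2, h3, h4, h5⟩
        refine ⟨by simpa [hac.symm, hbc.symm, had.symm, hbd.symm] using h2, h4, ?_⟩
        intro m hmc hmd
        by_cases hma : m = a
        · subst hma; simpa using h1
        by_cases hmb : m = b
        · subst hmb; simpa using h1.trans h3
        · simpa [hma, hmb] using h5 m hma hmb hmc hmd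
    simp only [key]
    rw [sum_ite_eq_and]
    simp [Matrix.of_apply, h]
  · rw [if_neg h]
    simp [Matrix.of_apply, h]

lemma QQ_comm {a b c d : Fin n} (hab : a ≠ b) (hcd : c ≠ d)
    (hac : a ≠ c) (had : a ≠ d) (hbc : b ≠ c) (hbd : b ≠ d) :
    Qmat n N a b * Qmat n N c d = Qmat n N c d * Qmat n N a b := by
  rw [QQ_disj hab hcd hac had hbc hbd,
    QQ_disj hcd hab hac.symm hbc.symm had.symm hbd.symm]
  ext w v
  simp only [Matrix.of_apply]
  congr 1
  simp only [eq_iff_iff]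
  constructor
  · rintro ⟨x1, x2, x3, x4, x5⟩
    exact ⟨x2, x1, x4, x3, fun m h1 h2 h3 h4 => x5 m h3 h4 h1 h2⟩
  · rintro ⟨x1, x2, x3, x4, x5⟩
    exact ⟨x2, x1, x4, x3, fun m h1 h2 h3 h4 => x5 m h3 h4 h1 h2⟩

lemma ttt_mat' {a b c : Fin n} (hab : a ≠ b) (hbc : b ≠ c) (hac : a ≠ c) :
    Qmat n N b c * Qmat n N a b * Qmat n N b c = Qmat n N b c := by
  have := ttt_mat (n := n) (N := N) (a := c) (b := b) (c := a) hbc.symm hab.symm hac.symm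
  rwa [Qmat_symm c b, Qmat_symm b a] at this

lemma Pk_eq (n N k : ℕ) (h : 1 ≤ k ∧ k + 1 ≤ n) :
    Pk n N k = Pmat n N ⟨k - 1, by omega⟩ ⟨k, by omega⟩ := dif_pos h

lemma Qk_eq (n N k : ℕ) (h : 1 ≤ k ∧ k + 1 ≤ n) :
    Qk n N k = Qmat n N ⟨k - 1, by omega⟩ ⟨k, by omega⟩ := dif_pos h

/-- The candidate representation on the free algebra. -/
def brMap (n N : ℕ) : FreeAlgebra ℂ (BIdx n) →ₐ[ℂ] TEnd n N :=
  FreeAlgebra.lift ℂ (Sum.elim (fun j : Fin (n - 1) => Pk n N ((j : ℕ) + 1))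
    (fun j : Fin (n - 1) => Qk n N ((j : ℕ) + 1)))

lemma brMap_bS {n N k : ℕ} (h : 1 ≤ k ∧ k ≤ n - 1) :
    brMap n N (bS n k) = Pk n N k := by
  rw [bS, dif_pos h, brMap, FreeAlgebra.lift_ι_apply, Sum.elim_inl]
  exact congrArg _ (show k - 1 + 1 = k by omega)

lemma brMap_bT {n N k : ℕ} (h : 1 ≤ k ∧ k ≤ n - 1) :
    brMap n N (bT n k) = Qk n N k := by
  rw [bT, dif_pos h, brMap, FreeAlgebra.lift_ι_apply, Sum.elim_inr]
  exact congrArg _ (show k - 1 + 1 = k by omega)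

lemma brMap_rel (n N : ℕ) :
    ∀ ⦃x y⦄, BrauerRel n (N : ℂ) x y → brMap n N x = brMap n N y := by
  intro x y r
  induction r with
  | s_sq k h =>
      rw [map_mul, map_one, brMap_bS h, Pk_eq n N k (by omega)]
      exact PP_self _ _
  | t_sq k h =>
      rw [map_mul, map_smul, brMap_bT h, Qk_eq n N k (by omega)]
      exact QQ_self (by simp only [ne_eq, Fin.mk.injEq]; omega)
  | st k h =>
      rw [map_mul, brMap_bS h, brMap_bT h, Pk_eq n N k (by omega), Qk_eq n N k (by omega)]
      exact PQ_self (by simp only [ne_eq, Fin.mk.injEq]; omega)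
  | ts k h =>
      rw [map_mul, brMap_bS h, brMap_bT h, Pk_eq n N k (by omega), Qk_eq n N k (by omega)]
      exact QP_self (by simp only [ne_eq, Fin.mk.injEq]; omega)
  | braid k h =>
      rw [map_mul, map_mul, map_mul, map_mul, brMap_bS ⟨h.1, by omega⟩,
        brMap_bS ⟨by omega, h.2⟩, Pk_eq n N k (by omega), Pk_eq n N (k+1) (by omega)]
      exact braid_mat (by simp only [ne_eq, Fin.mk.injEq]; omega)
        (by simp only [ne_eq, Fin.mk.injEq]; omega)
        (by simp only [ne_eq, Fin.mk.injEq]; omega)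
  | ttt_lo k h =>
      rw [map_mul, map_mul, brMap_bT ⟨h.1, by omega⟩, brMap_bT ⟨by omega, h.2⟩,
        Qk_eq n N k (by omega), Qk_eq n N (k+1) (by omega)]
      exact ttt_mat (by simp only [ne_eq, Fin.mk.injEq]; omega)
        (by simp only [ne_eq, Fin.mk.injEq]; omega)
        (by simp only [ne_eq, Fin.mk.injEq]; omega)
  | ttt_hi k h =>
      rw [map_mul, map_mul, brMap_bT ⟨h.1, by omega⟩, brMap_bT ⟨by omega, h.2⟩,
        Qk_eq n N k (by omega), Qk_eq n N (k+1) (by omega)]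
      exact ttt_mat' (by simp only [ne_eq, Fin.mk.injEq]; omega)
        (by simp only [ne_eq, Fin.mk.injEq]; omega)
        (by simp only [ne_eq, Fin.mk.injEq]; omega)
  | stt k h =>
      rw [map_mul, map_mul, map_mul, brMap_bS ⟨h.1, by omega⟩, brMap_bS ⟨by omega, h.2⟩,
        brMap_bT ⟨h.1, by omega⟩, brMap_bT ⟨by omega, h.2⟩,
        Pk_eq n N k (by omega), Pk_eq n N (k+1) (by omega),
        Qk_eq n N k (by omega), Qk_eq n N (k+1) (by omega), mul_assoc]
      exact stt_mat (by simp only [ne_eq, Fin.mk.injEq]; omega)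
        (by simp only [ne_eq, Fin.mk.injEq]; omega)
        (by simp only [ne_eq, Fin.mk.injEq]; omega)
  | tts k h =>
      rw [map_mul, map_mul, map_mul, brMap_bS ⟨h.1, by omega⟩, brMap_bS ⟨by omega, h.2⟩,
        brMap_bT ⟨h.1, by omega⟩, brMap_bT ⟨by omega, h.2⟩,
        Pk_eq n N k (by omega), Pk_eq n N (k+1) (by omega),
        Qk_eq n N k (by omega), Qk_eq n N (k+1) (by omega)]
      exact tts_mat (by simp only [ne_eq, Fin.mk.injEq]; omega)
        (by simp only [ne_eq, Fin.mk.injEq]; omega)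
        (by simp only [ne_eq, Fin.mk.injEq]; omega)
  | ss_comm k l h =>
      rw [map_mul, map_mul, brMap_bS ⟨by omega, by omega⟩, brMap_bS ⟨by omega, by omega⟩,
        Pk_eq n N k (by omega), Pk_eq n N l (by omega)]
      exact PP_comm (by simp only [ne_eq, Fin.mk.injEq]; omega)
        (by simp only [ne_eq, Fin.mk.injEq]; omega)
        (by simp only [ne_eq, Fin.mk.injEq]; omega)
        (by simp only [ne_eq, Fin.mk.injEq]; omega)
  | ts_comm k l h =>
      rw [map_mul, map_mul, brMap_bS ⟨by omega, by omega⟩, brMap_bT ⟨by omega, by omega⟩,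
        Pk_eq n N l (by omega), Qk_eq n N k (by omega)]
      exact QP_comm (by simp only [ne_eq, Fin.mk.injEq]; omega)
        (by simp only [ne_eq, Fin.mk.injEq]; omega)
        (by simp only [ne_eq, Fin.mk.injEq]; omega)
        (by simp only [ne_eq, Fin.mk.injEq]; omega)
  | tt_comm k l h =>
      rw [map_mul, map_mul, brMap_bT ⟨by omega, by omega⟩, brMap_bT ⟨by omega, by omega⟩,
        Qk_eq n N k (by omega), Qk_eq n N l (by omega)]
      exact QQ_comm (by simp only [ne_eq, Fin.mk.injEq]; omega)
        (by simp only [ne_eq, Fin.mk.injEq]; omega)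
        (by simp only [ne_eq, Fin.mk.injEq]; omega)
        (by simp only [ne_eq, Fin.mk.injEq]; omega)
        (by simp only [ne_eq, Fin.mk.injEq]; omega)
        (by simp only [ne_eq, Fin.mk.injEq]; omega)

/-- For every positive integer `N` there exists a (necessarily
unique) `ℂ`-algebra homomorphism from the Brauer algebra `B(n,N)` to
`End(U^{⊗n})` sending `s_k ↦ P_k` and `t_k ↦ Q_k` for every `k = 1,…,n−1`. -/
theorem brauer_rep_exists (n N : ℕ) (hn : 1 ≤ n) (hN : 1 ≤ N) :
    ∃! φ : BrauerAlgebra n (N : ℂ) →ₐ[ℂ] TEnd n N,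
      ∀ k, 1 ≤ k → k ≤ n - 1 →
        φ (sB n (N : ℂ) k) = Pk n N k ∧ φ (tB n (N : ℂ) k) = Qk n N k := by
  classical
  refine ⟨RingQuot.liftAlgHom ℂ ⟨brMap n N, brMap_rel n N⟩, ?_, ?_⟩
  · intro k hk1 hk2
    constructor
    · rw [sB, RingQuot.liftAlgHom_mkAlgHom_apply, brMap_bS ⟨hk1, hk2⟩]
    · rw [tB, RingQuot.liftAlgHom_mkAlgHom_apply, brMap_bT ⟨hk1, hk2⟩]
  · intro ψ hψ
    apply RingQuot.ringQuot_ext'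
    apply FreeAlgebra.hom_ext
    funext i
    cases i with
    | inl j =>
      have hj := j.is_lt
      have hgen : FreeAlgebra.ι ℂ (Sum.inl j : BIdx n) = bS n ((j : ℕ) + 1) := by
        rw [bS, dif_pos (⟨by omega, by omega⟩ : 1 ≤ (j:ℕ)+1 ∧ (j:ℕ)+1 ≤ n - 1)]
        rfl
      simp only [Function.comp_apply, AlgHom.comp_apply, hgen]
      rw [show (RingQuot.mkAlgHom ℂ (BrauerRel n (N:ℂ))) (bS n ((j:ℕ)+1))
        = sB n (N:ℂ) ((j:ℕ)+1) from rfl]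
      rw [(hψ ((j:ℕ)+1) (by omega) (by omega)).1, sB,
        RingQuot.liftAlgHom_mkAlgHom_apply, brMap_bS ⟨by omega, by omega⟩]
    | inr j =>
      have hj := j.is_lt
      have hgen : FreeAlgebra.ι ℂ (Sum.inr j : BIdx n) = bT n ((j : ℕ) + 1) := by
        rw [bT, dif_pos (⟨by omega, by omega⟩ : 1 ≤ (j:ℕ)+1 ∧ (j:ℕ)+1 ≤ n - 1)]
        rfl
      simp only [Function.comp_apply, AlgHom.comp_apply, hgen]
      rw [show (RingQuot.mkAlgHom ℂ (BrauerRel n (N:ℂ))) (bT n ((j:ℕ)+1))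
        = tB n (N:ℂ) ((j:ℕ)+1) from rfl]
      rw [(hψ ((j:ℕ)+1) (by omega) (by omega)).2, tB,
        RingQuot.liftAlgHom_mkAlgHom_apply, brMap_bT ⟨by omega, by omega⟩]
end
end

section
/- In the Brauer algebra B(n,N), for every k = 2,…,n the Jucys–Murphy element x_k commutes with every element of the subalgebra B(k−1,N); equivalently, x_k s_l = s_l x_k and x_k t_l = t_l x_k for all 1 ≤ l ≤ k−2. -/
noncomputable section

open scoped BigOperators

/-- The element `σ_{k,l} = s_{l−1} s_{l−2} ⋯ s_{k+1}` of `B(n,N)`. -/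
def sigmaB (n : ℕ) (N : ℂ) (k l : ℕ) : BrauerAlgebra n N :=
  ((List.range (l - 1 - k)).map (fun j => sB n N (l - 1 - j))).prod

/-- The element `σ_{k,l}⁻¹ = s_{k+1} s_{k+2} ⋯ s_{l−1}` of `B(n,N)`. -/
def sigmaBInv (n : ℕ) (N : ℂ) (k l : ℕ) : BrauerAlgebra n N :=
  ((List.range (l - 1 - k)).map (fun j => sB n N (k + 1 + j))).prod

/-- The transposition `(k,l) = σ_{k,l} s_k σ_{k,l}⁻¹` in `B(n,N)` (`k < l`). -/
def transpB (n : ℕ) (N : ℂ) (k l : ℕ) : BrauerAlgebra n N :=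
  sigmaB n N k l * sB n N k * sigmaBInv n N k l

/-- The element `ov(k,l) = σ_{k,l} t_k σ_{k,l}⁻¹` in `B(n,N)` (`k < l`). -/
def ovB (n : ℕ) (N : ℂ) (k l : ℕ) : BrauerAlgebra n N :=
  sigmaB n N k l * tB n N k * sigmaBInv n N k l

/-- The Jucys–Murphy element
`x_k = (N−1)/2 + Σ_{l=1}^{k−1} ((l,k) − ov(l,k))` of `B(n,N)` (1-based). -/
def xB (n : ℕ) (N : ℂ) (k : ℕ) : BrauerAlgebra n N :=
  algebraMap ℂ (BrauerAlgebra n N) ((N - 1) / 2)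
    + ∑ l ∈ Finset.range (k - 1), (transpB n N (l + 1) k - ovB n N (l + 1) k)

/-- The subalgebra `B(m,N)` of `B(n,N)` generated by
`s₁,…,s_{m−1}, t₁,…,t_{m−1}`. -/
def Bsub (n : ℕ) (N : ℂ) (m : ℕ) : Subalgebra ℂ (BrauerAlgebra n N) :=
  Algebra.adjoin ℂ
    {x | ∃ k, 1 ≤ k ∧ k ≤ m - 1 ∧ (x = sB n N k ∨ x = tB n N k)}

/- ### helper lemmas for associativity juggling -/

section MulHelpers

variable {M : Type*} [Monoid M]

theorem mulA2 {u v x y : M} (h : u * v = x * y) (c : M) :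
    u * (v * c) = x * (y * c) := by
  simp only [← mul_assoc]; rw [h]

theorem mulA21 {u v x : M} (h : u * v = x) (c : M) :
    u * (v * c) = x * c := by
  simp only [← mul_assoc]; rw [h]

theorem mulA3 {u v w x y z : M} (h : u * v * w = x * y * z) (c : M) :
    u * (v * (w * c)) = x * (y * (z * c)) := by
  simp only [← mul_assoc]; rw [h]

theorem mulA32 {u v w x y : M} (h : u * v * w = x * y) (c : M) :
    u * (v * (w * c)) = x * (y * c) := by
  simp only [← mul_assoc]; rw [h]

theorem mulA23 {u v x y z : M} (h : u * v = x * y * z) (c : M) :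
    u * (v * c) = x * (y * (z * c)) := by
  simp only [← mul_assoc]; rw [h]

end MulHelpers

/- ### defining relations in the quotient -/

section Rels

variable {n : ℕ} {N : ℂ}

theorem Rss (i : ℕ) (h : 1 ≤ i ∧ i ≤ n - 1) : sB n N i * sB n N i = 1 := by
  simpa only [map_mul, map_one, sB, tB] using
    RingQuot.mkAlgHom_rel ℂ (BrauerRel.s_sq (N := N) i h)

theorem Rst (i : ℕ) (h : 1 ≤ i ∧ i ≤ n - 1) : sB n N i * tB n N i = tB n N i := by
  simpa only [map_mul, sB, tB] using
    RingQuot.mkAlgHom_rel ℂ (BrauerRel.st (N := N) i h)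

theorem Rts (i : ℕ) (h : 1 ≤ i ∧ i ≤ n - 1) : tB n N i * sB n N i = tB n N i := by
  simpa only [map_mul, sB, tB] using
    RingQuot.mkAlgHom_rel ℂ (BrauerRel.ts (N := N) i h)

theorem Rbraid (i : ℕ) (h : 1 ≤ i ∧ i + 1 ≤ n - 1) :
    sB n N i * sB n N (i+1) * sB n N i = sB n N (i+1) * sB n N i * sB n N (i+1) := by
  simpa only [map_mul, sB, tB] using
    RingQuot.mkAlgHom_rel ℂ (BrauerRel.braid (N := N) i h)

theorem Rttt_lo (i : ℕ) (h : 1 ≤ i ∧ i + 1 ≤ n - 1) :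
    tB n N i * tB n N (i+1) * tB n N i = tB n N i := by
  simpa only [map_mul, sB, tB] using
    RingQuot.mkAlgHom_rel ℂ (BrauerRel.ttt_lo (N := N) i h)

theorem Rttt_hi (i : ℕ) (h : 1 ≤ i ∧ i + 1 ≤ n - 1) :
    tB n N (i+1) * tB n N i * tB n N (i+1) = tB n N (i+1) := by
  simpa only [map_mul, sB, tB] using
    RingQuot.mkAlgHom_rel ℂ (BrauerRel.ttt_hi (N := N) i h)

theorem Rstt (i : ℕ) (h : 1 ≤ i ∧ i + 1 ≤ n - 1) :
    sB n N i * tB n N (i+1) * tB n N i = sB n N (i+1) * tB n N i := by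
  simpa only [map_mul, sB, tB] using
    RingQuot.mkAlgHom_rel ℂ (BrauerRel.stt (N := N) i h)

theorem Rtts (i : ℕ) (h : 1 ≤ i ∧ i + 1 ≤ n - 1) :
    tB n N (i+1) * tB n N i * sB n N (i+1) = tB n N (i+1) * sB n N i := by
  simpa only [map_mul, sB, tB] using
    RingQuot.mkAlgHom_rel ℂ (BrauerRel.tts (N := N) i h)

theorem Rss_comm (i j : ℕ)
    (h : 1 ≤ i ∧ i ≤ n - 1 ∧ 1 ≤ j ∧ j ≤ n - 1 ∧ (i + 1 < j ∨ j + 1 < i)) :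
    sB n N i * sB n N j = sB n N j * sB n N i := by
  simpa only [map_mul, sB, tB] using
    RingQuot.mkAlgHom_rel ℂ (BrauerRel.ss_comm (N := N) i j h)

theorem Rts_comm (i j : ℕ)
    (h : 1 ≤ i ∧ i ≤ n - 1 ∧ 1 ≤ j ∧ j ≤ n - 1 ∧ (i + 1 < j ∨ j + 1 < i)) :
    tB n N i * sB n N j = sB n N j * tB n N i := by
  simpa only [map_mul, sB, tB] using
    RingQuot.mkAlgHom_rel ℂ (BrauerRel.ts_comm (N := N) i j h)

theorem Rtt_comm (i j : ℕ)
    (h : 1 ≤ i ∧ i ≤ n - 1 ∧ 1 ≤ j ∧ j ≤ n - 1 ∧ (i + 1 < j ∨ j + 1 < i)) :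
    tB n N i * tB n N j = tB n N j * tB n N i := by
  simpa only [map_mul, sB, tB] using
    RingQuot.mkAlgHom_rel ℂ (BrauerRel.tt_comm (N := N) i j h)

end Rels
/- ### derived relations -/

section Derived

variable {n : ℕ} {N : ℂ}

theorem D2 (i : ℕ) (h : 1 ≤ i ∧ i + 1 ≤ n - 1) :
    tB n N (i+1) * sB n N i * sB n N (i+1) = tB n N (i+1) * tB n N i := by
  have h1 : 1 ≤ i + 1 ∧ i + 1 ≤ n - 1 := ⟨by omega, h.2⟩
  calc tB n N (i+1) * sB n N i * sB n N (i+1)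
      = (tB n N (i+1) * tB n N i * sB n N (i+1)) * sB n N (i+1) := by rw [Rtts i h]
    _ = tB n N (i+1) * tB n N i * (sB n N (i+1) * sB n N (i+1)) := by
        rw [mul_assoc]
    _ = tB n N (i+1) * tB n N i := by rw [Rss _ h1, mul_one]

theorem D4 (i : ℕ) (h : 1 ≤ i ∧ i + 1 ≤ n - 1) :
    tB n N i * tB n N (i+1) * sB n N i = tB n N i * sB n N (i+1) := by
  calc tB n N i * tB n N (i+1) * sB n N i
      = tB n N i * (tB n N (i+1) * sB n N i) := by rw [mul_assoc]
    _ = tB n N i * (tB n N (i+1) * tB n N i * sB n N (i+1)) := by rw [Rtts i h]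
    _ = (tB n N i * tB n N (i+1) * tB n N i) * sB n N (i+1) := by
        simp only [mul_assoc]
    _ = tB n N i * sB n N (i+1) := by rw [Rttt_lo i h]

theorem D4' (i : ℕ) (h : 1 ≤ i ∧ i + 1 ≤ n - 1) :
    tB n N i * sB n N (i+1) * sB n N i = tB n N i * tB n N (i+1) := by
  have hi : 1 ≤ i ∧ i ≤ n - 1 := ⟨h.1, by omega⟩
  calc tB n N i * sB n N (i+1) * sB n N i
      = (tB n N i * tB n N (i+1) * sB n N i) * sB n N i := by rw [D4 i h]
    _ = tB n N i * tB n N (i+1) * (sB n N i * sB n N i) := by rw [mul_assoc]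
    _ = tB n N i * tB n N (i+1) := by rw [Rss _ hi, mul_one]

theorem D5 (i : ℕ) (h : 1 ≤ i ∧ i + 1 ≤ n - 1) :
    sB n N i * sB n N (i+1) * tB n N i = tB n N (i+1) * tB n N i := by
  have hi : 1 ≤ i ∧ i ≤ n - 1 := ⟨h.1, by omega⟩
  have key := Rstt (n := n) (N := N) i h
  calc sB n N i * sB n N (i+1) * tB n N i
      = sB n N i * (sB n N (i+1) * tB n N i) := by rw [mul_assoc]
    _ = sB n N i * (sB n N i * tB n N (i+1) * tB n N i) := by rw [← key]
    _ = (sB n N i * sB n N i) * (tB n N (i+1) * tB n N i) := by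
        simp only [mul_assoc]
    _ = tB n N (i+1) * tB n N i := by rw [Rss _ hi, one_mul]

theorem D6' (i : ℕ) (h : 1 ≤ i ∧ i + 1 ≤ n - 1) :
    sB n N (i+1) * tB n N i * tB n N (i+1) = sB n N i * tB n N (i+1) := by
  calc sB n N (i+1) * tB n N i * tB n N (i+1)
      = (sB n N i * tB n N (i+1) * tB n N i) * tB n N (i+1) := by rw [Rstt i h]
    _ = sB n N i * (tB n N (i+1) * tB n N i * tB n N (i+1)) := by
        simp only [mul_assoc]
    _ = sB n N i * tB n N (i+1) := by rw [Rttt_hi i h]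

theorem D6 (i : ℕ) (h : 1 ≤ i ∧ i + 1 ≤ n - 1) :
    sB n N (i+1) * sB n N i * tB n N (i+1) = tB n N i * tB n N (i+1) := by
  have h1 : 1 ≤ i + 1 ∧ i + 1 ≤ n - 1 := ⟨by omega, h.2⟩
  calc sB n N (i+1) * sB n N i * tB n N (i+1)
      = sB n N (i+1) * (sB n N i * tB n N (i+1)) := by rw [mul_assoc]
    _ = sB n N (i+1) * (sB n N (i+1) * tB n N i * tB n N (i+1)) := by rw [D6' i h]
    _ = (sB n N (i+1) * sB n N (i+1)) * (tB n N i * tB n N (i+1)) := by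
        simp only [mul_assoc]
    _ = tB n N i * tB n N (i+1) := by rw [Rss _ h1, one_mul]

theorem Dsts (i : ℕ) (h : 1 ≤ i ∧ i + 1 ≤ n - 1) :
    sB n N (i+1) * tB n N i * sB n N (i+1) = sB n N i * tB n N (i+1) * sB n N i := by
  calc sB n N (i+1) * tB n N i * sB n N (i+1)
      = (sB n N i * tB n N (i+1) * tB n N i) * sB n N (i+1) := by rw [Rstt i h]
    _ = sB n N i * (tB n N (i+1) * tB n N i * sB n N (i+1)) := by
        simp only [mul_assoc]
    _ = sB n N i * (tB n N (i+1) * sB n N i) := by rw [Rtts i h]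
    _ = sB n N i * tB n N (i+1) * sB n N i := by rw [mul_assoc]

end Derived
section Sigma

variable {n : ℕ} {N : ℂ}

theorem SG_one (l k : ℕ) (h : k ≤ l + 1) : sigmaB n N l k = 1 := by
  have : k - 1 - l = 0 := by omega
  simp [sigmaB, this]

theorem SG_one' (l k : ℕ) (h : k ≤ l + 1) : sigmaBInv n N l k = 1 := by
  have : k - 1 - l = 0 := by omega
  simp [sigmaBInv, this]

theorem SG_bot (l k : ℕ) (h : l + 1 < k) :
    sigmaB n N l k = sigmaB n N (l+1) k * sB n N (l+1) := by
  have h1 : k - 1 - l = (k - 1 - (l + 1)) + 1 := by omega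
  have h2 : k - 1 - (k - 1 - (l + 1)) = l + 1 := by omega
  rw [sigmaB, h1, List.range_succ, List.map_append, List.prod_append,
    show (List.map (fun j => sB n N (k - 1 - j)) [k - 1 - (l+1)]).prod
      = sB n N (l+1) by simp [h2]]
  rfl

theorem SG_bot' (l k : ℕ) (h : l + 1 < k) :
    sigmaBInv n N l k = sB n N (l+1) * sigmaBInv n N (l+1) k := by
  have h1 : k - 1 - l = (k - 1 - (l + 1)) + 1 := by omega
  have e1 : (fun j => sB n N (l + 1 + (j + 1))) = (fun j => sB n N (l + 1 + 1 + j)) := by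
    funext j; congr 1; omega
  rw [sigmaBInv, h1, List.range_succ_eq_map, List.map_cons, List.prod_cons,
    List.map_map]
  have e0 : l + 1 + 0 = l + 1 := by omega
  rw [show ((fun j => sB n N (l + 1 + j)) ∘ (fun j => j + 1)) = fun j => sB n N (l + 1 + (j+1)) from rfl, e1, e0]
  rfl

theorem TP_base (m : ℕ) : transpB n N m (m+1) = sB n N m := by
  rw [transpB, SG_one _ _ (by omega), SG_one' _ _ (by omega), one_mul, mul_one]

theorem OV_base (m : ℕ) : ovB n N m (m+1) = tB n N m := by
  rw [ovB, SG_one _ _ (by omega), SG_one' _ _ (by omega), one_mul, mul_one]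

/-- everything that commutes with the relevant generators commutes with σ. -/
theorem comm_sigma (c : BrauerAlgebra n N) (l k : ℕ)
    (h : ∀ i, l + 1 ≤ i → i ≤ k - 1 → Commute c (sB n N i)) :
    Commute c (sigmaB n N l k) := by
  rw [sigmaB]
  apply Commute.list_prod_right
  intro x hx
  simp only [List.mem_map, List.mem_range] at hx
  obtain ⟨j, hj, rfl⟩ := hx
  exact h _ (by omega) (by omega)

theorem comm_sigma' (c : BrauerAlgebra n N) (l k : ℕ)
    (h : ∀ i, l + 1 ≤ i → i ≤ k - 1 → Commute c (sB n N i)) :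
    Commute c (sigmaBInv n N l k) := by
  rw [sigmaBInv]
  apply Commute.list_prod_right
  intro x hx
  simp only [List.mem_map, List.mem_range] at hx
  obtain ⟨j, hj, rfl⟩ := hx
  exact h _ (by omega) (by omega)

end Sigma
section Conj

variable {n : ℕ} {N : ℂ}

theorem TP_bot (m k : ℕ) (hm : 1 ≤ m) (hmk : m + 1 < k) (hk : k ≤ n) :
    transpB n N m k = sB n N m * transpB n N (m+1) k * sB n N m := by
  have hb : 1 ≤ m ∧ m + 1 ≤ n - 1 := ⟨hm, by omega⟩
  have hcs : ∀ i, m + 1 + 1 ≤ i → i ≤ k - 1 → Commute (sB n N m) (sB n N i) :=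
    fun i h1 h2 => Rss_comm m i ⟨hm, by omega, by omega, by omega, Or.inl (by omega)⟩
  have hσ := comm_sigma (sB n N m) (m+1) k hcs
  have hσ' := comm_sigma' (sB n N m) (m+1) k hcs
  rw [transpB, transpB, SG_bot m k (by omega), SG_bot' m k (by omega)]
  simp only [mul_assoc]
  rw [mulA2 hσ.eq, ← hσ'.eq, mulA3 (Rbraid m hb) (sigmaBInv n N (m+1) k)]

theorem OV_bot (m k : ℕ) (hm : 1 ≤ m) (hmk : m + 1 < k) (hk : k ≤ n) :
    ovB n N m k = sB n N m * ovB n N (m+1) k * sB n N m := by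
  have hb : 1 ≤ m ∧ m + 1 ≤ n - 1 := ⟨hm, by omega⟩
  have hcs : ∀ i, m + 1 + 1 ≤ i → i ≤ k - 1 → Commute (sB n N m) (sB n N i) :=
    fun i h1 h2 => Rss_comm m i ⟨hm, by omega, by omega, by omega, Or.inl (by omega)⟩
  have hσ := comm_sigma (sB n N m) (m+1) k hcs
  have hσ' := comm_sigma' (sB n N m) (m+1) k hcs
  rw [ovB, ovB, SG_bot m k (by omega), SG_bot' m k (by omega)]
  simp only [mul_assoc]
  rw [mulA2 hσ.eq, ← hσ'.eq, ← mulA3 (Dsts m hb) (sigmaBInv n N (m+1) k)]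

/-- distant generators commute with (m,k) and ov(m,k) -/
theorem comm_far (j m k : ℕ) (hj : 1 ≤ j) (hjm : j + 1 < m) (hmk : m < k)
    (hk : k ≤ n) :
    Commute (sB n N j) (transpB n N m k) ∧ Commute (sB n N j) (ovB n N m k) ∧
    Commute (tB n N j) (transpB n N m k) ∧ Commute (tB n N j) (ovB n N m k) := by
  have hcs : ∀ i, m + 1 ≤ i → i ≤ k - 1 → Commute (sB n N j) (sB n N i) :=
    fun i h1 h2 => Rss_comm j i ⟨hj, by omega, by omega, by omega, Or.inl (by omega)⟩
  have hct : ∀ i, m + 1 ≤ i → i ≤ k - 1 → Commute (tB n N j) (sB n N i) :=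
    fun i h1 h2 => Rts_comm j i ⟨hj, by omega, by omega, by omega, Or.inl (by omega)⟩
  have hss : Commute (sB n N j) (sB n N m) :=
    Rss_comm j m ⟨hj, by omega, by omega, by omega, Or.inl (by omega)⟩
  have hst : Commute (sB n N j) (tB n N m) :=
    (Rts_comm m j ⟨by omega, by omega, hj, by omega, Or.inr (by omega)⟩).symm
  have hts : Commute (tB n N j) (sB n N m) :=
    Rts_comm j m ⟨hj, by omega, by omega, by omega, Or.inl (by omega)⟩
  have htt : Commute (tB n N j) (tB n N m) :=
    Rtt_comm j m ⟨hj, by omega, by omega, by omega, Or.inl (by omega)⟩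
  refine ⟨?_, ?_, ?_, ?_⟩ <;> first | rw [transpB] | rw [ovB]
  · exact ((comm_sigma _ _ _ hcs).mul_right hss).mul_right (comm_sigma' _ _ _ hcs)
  · exact ((comm_sigma _ _ _ hcs).mul_right hst).mul_right (comm_sigma' _ _ _ hcs)
  · exact ((comm_sigma _ _ _ hct).mul_right hts).mul_right (comm_sigma' _ _ _ hct)
  · exact ((comm_sigma _ _ _ hct).mul_right htt).mul_right (comm_sigma' _ _ _ hct)

end Conj
section XL

variable {M : Type*} [Monoid M]

theorem XLs (a b Y : M) (braid : a * b * a = b * a * b) (hY : a * Y = Y * a) :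
    b * (a * b * Y * b * a) = (a * b * Y * b * a) * b := by
  have braid1 : a * (b * a) = b * (a * b) := by simpa only [mul_assoc] using braid
  simp only [mul_assoc]
  rw [mulA3 braid.symm (Y * (b * a)), mulA2 hY (b * a), braid1]

theorem XLt (a b ta tb Y : M)
    (h1 : tb * a * b = tb * ta) (h2 : ta * b * a = ta * tb)
    (h3 : b * a * tb = ta * tb) (h4 : a * b * ta = tb * ta)
    (hYta : ta * Y = Y * ta) :
    tb * (a * b * Y * b * a) = (a * b * Y * b * a) * tb := by
  simp only [mul_assoc]
  rw [mulA32 h1 (Y * (b * a)), mulA2 hYta (b * a),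
    show ta * (b * a) = ta * tb by simpa only [mul_assoc] using h2,
    show b * (a * tb) = ta * tb by simpa only [mul_assoc] using h3,
    ← mulA2 hYta tb, mulA32 h4 (Y * tb)]

end XL
section Below

variable {n : ℕ} {N : ℂ}

theorem comm_below (l k : ℕ) (hl : 2 ≤ l) (hlk : l + 1 < k) (hk : k ≤ n) :
    ∀ d m, 1 ≤ m → m + d = l - 1 →
      Commute (sB n N l) (transpB n N m k) ∧ Commute (sB n N l) (ovB n N m k) ∧
      Commute (tB n N l) (transpB n N m k) ∧ Commute (tB n N l) (ovB n N m k) := by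
  intro d
  induction d with
  | zero =>
    intro m hm1 hm2
    have e : l = m + 1 := by omega
    subst e
    have hb : 1 ≤ m ∧ m + 1 ≤ n - 1 := ⟨by omega, by omega⟩
    have hT : transpB n N m k
        = sB n N m * (sB n N (m+1) * transpB n N (m+2) k * sB n N (m+1)) * sB n N m := by
      rw [TP_bot m k (by omega) (by omega) hk, TP_bot (m+1) k (by omega) (by omega) hk]
    have hO : ovB n N m k
        = sB n N m * (sB n N (m+1) * ovB n N (m+2) k * sB n N (m+1)) * sB n N m := by
      rw [OV_bot m k (by omega) (by omega) hk, OV_bot (m+1) k (by omega) (by omega) hk]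
    have hfar := comm_far (n := n) (N := N) m (m+2) k (by omega) (by omega) (by omega) hk
    refine ⟨?_, ?_, ?_, ?_⟩
    · show sB n N (m+1) * transpB n N m k = transpB n N m k * sB n N (m+1)
      rw [hT]
      have := XLs (sB n N m) (sB n N (m+1)) (transpB n N (m+2) k) (Rbraid m hb)
        hfar.1.eq
      simp only [mul_assoc] at this ⊢
      exact this
    · show sB n N (m+1) * ovB n N m k = ovB n N m k * sB n N (m+1)
      rw [hO]
      have := XLs (sB n N m) (sB n N (m+1)) (ovB n N (m+2) k) (Rbraid m hb)
        hfar.2.1.eq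
      simp only [mul_assoc] at this ⊢
      exact this
    · show tB n N (m+1) * transpB n N m k = transpB n N m k * tB n N (m+1)
      rw [hT]
      have := XLt (sB n N m) (sB n N (m+1)) (tB n N m) (tB n N (m+1))
        (transpB n N (m+2) k) (D2 m hb) (D4' m hb) (D6 m hb) (D5 m hb)
        hfar.2.2.1.eq
      simp only [mul_assoc] at this ⊢
      exact this
    · show tB n N (m+1) * ovB n N m k = ovB n N m k * tB n N (m+1)
      rw [hO]
      have := XLt (sB n N m) (sB n N (m+1)) (tB n N m) (tB n N (m+1))
        (ovB n N (m+2) k) (D2 m hb) (D4' m hb) (D6 m hb) (D5 m hb)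
        hfar.2.2.2.eq
      simp only [mul_assoc] at this ⊢
      exact this
  | succ d ih =>
    intro m hm1 hm2
    have hrecT := TP_bot (n := n) (N := N) m k hm1 (by omega) hk
    have hrecO := OV_bot (n := n) (N := N) m k hm1 (by omega) hk
    have ihm := ih (m+1) (by omega) (by omega)
    have hsm : Commute (sB n N l) (sB n N m) :=
      Rss_comm l m ⟨by omega, by omega, by omega, by omega, Or.inr (by omega)⟩
    have htm : Commute (tB n N l) (sB n N m) :=
      Rts_comm l m ⟨by omega, by omega, by omega, by omega, Or.inr (by omega)⟩
    refine ⟨?_, ?_, ?_, ?_⟩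
    · rw [hrecT]; exact (hsm.mul_right ihm.1).mul_right hsm
    · rw [hrecO]; exact (hsm.mul_right ihm.2.1).mul_right hsm
    · rw [hrecT]; exact (htm.mul_right ihm.2.2.1).mul_right htm
    · rw [hrecO]; exact (htm.mul_right ihm.2.2.2).mul_right htm

end Below
section Special

variable {n : ℕ} {N : ℂ}

theorem Ssp1 (l k : ℕ) (hl : 1 ≤ l) (hlk : l + 1 < k) (hk : k ≤ n) :
    sB n N l * transpB n N l k = transpB n N (l+1) k * sB n N l := by
  rw [TP_bot l k hl hlk hk]
  simp only [mul_assoc]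
  rw [mulA21 (Rss l ⟨hl, by omega⟩), one_mul]

theorem Ssp2 (l k : ℕ) (hl : 1 ≤ l) (hlk : l + 1 < k) (hk : k ≤ n) :
    sB n N l * transpB n N (l+1) k = transpB n N l k * sB n N l := by
  rw [TP_bot l k hl hlk hk]
  simp only [mul_assoc]
  rw [Rss l ⟨hl, by omega⟩, mul_one]

theorem Osp1 (l k : ℕ) (hl : 1 ≤ l) (hlk : l + 1 < k) (hk : k ≤ n) :
    sB n N l * ovB n N l k = ovB n N (l+1) k * sB n N l := by
  rw [OV_bot l k hl hlk hk]
  simp only [mul_assoc]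
  rw [mulA21 (Rss l ⟨hl, by omega⟩), one_mul]

theorem Osp2 (l k : ℕ) (hl : 1 ≤ l) (hlk : l + 1 < k) (hk : k ≤ n) :
    sB n N l * ovB n N (l+1) k = ovB n N l k * sB n N l := by
  rw [OV_bot l k hl hlk hk]
  simp only [mul_assoc]
  rw [Rss l ⟨hl, by omega⟩, mul_one]

theorem Tsp1 (l k : ℕ) (hl : 1 ≤ l) (hlk : l + 1 < k) (hk : k ≤ n) :
    tB n N l * transpB n N l k = tB n N l * ovB n N (l+1) k := by
  have hb : 1 ≤ l ∧ l + 1 ≤ n - 1 := ⟨hl, by omega⟩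
  have hcs : ∀ i, l + 1 + 1 ≤ i → i ≤ k - 1 → Commute (sB n N l) (sB n N i) :=
    fun i h1 h2 => Rss_comm l i ⟨hl, by omega, by omega, by omega, Or.inl (by omega)⟩
  have hct : ∀ i, l + 1 + 1 ≤ i → i ≤ k - 1 → Commute (tB n N l) (sB n N i) :=
    fun i h1 h2 => Rts_comm l i ⟨hl, by omega, by omega, by omega, Or.inl (by omega)⟩
  have hσs2 := comm_sigma' (sB n N l) (l+1) k hcs
  have hσt1 := comm_sigma (tB n N l) (l+1) k hct
  rw [TP_bot l k hl hlk hk, transpB, ovB]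
  simp only [mul_assoc]
  rw [mulA21 (Rts l ⟨hl, by omega⟩), mulA2 hσt1.eq, ← hσs2.eq,
    mulA32 (D4' l hb) (sigmaBInv n N (l+1) k), mulA2 hσt1.eq]

theorem Tsp2 (l k : ℕ) (hl : 1 ≤ l) (hlk : l + 1 < k) (hk : k ≤ n) :
    tB n N l * ovB n N l k = tB n N l * transpB n N (l+1) k := by
  have hb : 1 ≤ l ∧ l + 1 ≤ n - 1 := ⟨hl, by omega⟩
  have hcs : ∀ i, l + 1 + 1 ≤ i → i ≤ k - 1 → Commute (sB n N l) (sB n N i) :=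
    fun i h1 h2 => Rss_comm l i ⟨hl, by omega, by omega, by omega, Or.inl (by omega)⟩
  have hct : ∀ i, l + 1 + 1 ≤ i → i ≤ k - 1 → Commute (tB n N l) (sB n N i) :=
    fun i h1 h2 => Rts_comm l i ⟨hl, by omega, by omega, by omega, Or.inl (by omega)⟩
  have hσs2 := comm_sigma' (sB n N l) (l+1) k hcs
  have hσt1 := comm_sigma (tB n N l) (l+1) k hct
  rw [OV_bot l k hl hlk hk, ovB, transpB]
  simp only [mul_assoc]
  rw [mulA21 (Rts l ⟨hl, by omega⟩), mulA2 hσt1.eq, ← hσs2.eq,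
    mulA32 (D4 l hb) (sigmaBInv n N (l+1) k), mulA2 hσt1.eq]

theorem Tsp3 (l k : ℕ) (hl : 1 ≤ l) (hlk : l + 1 < k) (hk : k ≤ n) :
    transpB n N l k * tB n N l = ovB n N (l+1) k * tB n N l := by
  have hb : 1 ≤ l ∧ l + 1 ≤ n - 1 := ⟨hl, by omega⟩
  have hcs : ∀ i, l + 1 + 1 ≤ i → i ≤ k - 1 → Commute (sB n N l) (sB n N i) :=
    fun i h1 h2 => Rss_comm l i ⟨hl, by omega, by omega, by omega, Or.inl (by omega)⟩
  have hct : ∀ i, l + 1 + 1 ≤ i → i ≤ k - 1 → Commute (tB n N l) (sB n N i) :=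
    fun i h1 h2 => Rts_comm l i ⟨hl, by omega, by omega, by omega, Or.inl (by omega)⟩
  have hσs1 := comm_sigma (sB n N l) (l+1) k hcs
  have hσt2 := comm_sigma' (tB n N l) (l+1) k hct
  rw [TP_bot l k hl hlk hk, transpB, ovB]
  simp only [mul_assoc]
  rw [Rst l ⟨hl, by omega⟩, ← hσt2.eq, mulA2 hσs1.eq,
    mulA32 (D5 l hb) (sigmaBInv n N (l+1) k)]

theorem Tsp4 (l k : ℕ) (hl : 1 ≤ l) (hlk : l + 1 < k) (hk : k ≤ n) :
    ovB n N l k * tB n N l = transpB n N (l+1) k * tB n N l := by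
  have hb : 1 ≤ l ∧ l + 1 ≤ n - 1 := ⟨hl, by omega⟩
  have hcs : ∀ i, l + 1 + 1 ≤ i → i ≤ k - 1 → Commute (sB n N l) (sB n N i) :=
    fun i h1 h2 => Rss_comm l i ⟨hl, by omega, by omega, by omega, Or.inl (by omega)⟩
  have hct : ∀ i, l + 1 + 1 ≤ i → i ≤ k - 1 → Commute (tB n N l) (sB n N i) :=
    fun i h1 h2 => Rts_comm l i ⟨hl, by omega, by omega, by omega, Or.inl (by omega)⟩
  have hσs1 := comm_sigma (sB n N l) (l+1) k hcs
  have hσt2 := comm_sigma' (tB n N l) (l+1) k hct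
  rw [OV_bot l k hl hlk hk, ovB, transpB]
  simp only [mul_assoc]
  rw [Rst l ⟨hl, by omega⟩, ← hσt2.eq, mulA2 hσs1.eq,
    mulA32 (Rstt l hb) (sigmaBInv n N (l+1) k)]

end Special
section Core

variable {n : ℕ} {N : ℂ}

theorem core (k l : ℕ) (hk2 : 2 ≤ k) (hkn : k ≤ n) (hl1 : 1 ≤ l) (hl2 : l ≤ k - 2) :
    (sB n N l * xB n N k = xB n N k * sB n N l) ∧
    (tB n N l * xB n N k = xB n N k * tB n N l) := by
  have hlk : l + 1 < k := by omega
  set D : ℕ → BrauerAlgebra n N :=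
    fun m => transpB n N m k - ovB n N m k with hD
  -- commutation of D m with s l / t l for m ∉ {l, l+1}
  have hDcomm : ∀ m, 1 ≤ m → m ≤ k - 1 → m ≠ l → m ≠ l + 1 →
      (sB n N l * D m = D m * sB n N l) ∧ (tB n N l * D m = D m * tB n N l) := by
    intro m hm1 hm2 hm3 hm4
    rcases lt_or_gt_of_ne hm3 with hml | hml
    · -- m < l
      have h4 := comm_below (n := n) (N := N) l k (by omega) hlk hkn (l - 1 - m) m hm1 (by omega)
      exact ⟨by rw [hD]; simp only [mul_sub, sub_mul, h4.1.eq, h4.2.1.eq],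
        by rw [hD]; simp only [mul_sub, sub_mul, h4.2.2.1.eq, h4.2.2.2.eq]⟩
    · -- m > l + 1
      have h4 := comm_far (n := n) (N := N) l m k hl1 (by omega) (by omega) hkn
      exact ⟨by rw [hD]; simp only [mul_sub, sub_mul, h4.1.eq, h4.2.1.eq],
        by rw [hD]; simp only [mul_sub, sub_mul, h4.2.2.1.eq, h4.2.2.2.eq]⟩
  constructor
  · -- s l
    rw [xB, mul_add, add_mul, ← Algebra.commutes ((N - 1) / 2) (sB n N l)]
    congr 1
    rw [Finset.mul_sum, Finset.sum_mul]
    have hswap : ∀ j ∈ Finset.range (k-1),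
        sB n N l * D (j+1) = D ((Equiv.swap (l-1) l) j + 1) * sB n N l := by
      intro j hj
      simp only [Finset.mem_range] at hj
      rcases eq_or_ne j (l-1) with rfl | h1
      · rw [Equiv.swap_apply_left, show l - 1 + 1 = l from by omega, hD]
        simp only [mul_sub, sub_mul]
        rw [Ssp1 l k hl1 hlk hkn, Osp1 l k hl1 hlk hkn]
      · rcases eq_or_ne j l with h2 | h2
        · rw [h2, Equiv.swap_apply_right, show l - 1 + 1 = l from by omega, hD]
          simp only [mul_sub, sub_mul]
          rw [Ssp2 l k hl1 hlk hkn, Osp2 l k hl1 hlk hkn]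
        · rw [Equiv.swap_apply_of_ne_of_ne h1 h2]
          exact (hDcomm (j+1) (by omega) (by omega) (by omega) (by omega)).1
    have hsum : ∑ j ∈ Finset.range (k-1), D ((Equiv.swap (l-1) l) j + 1)
        = ∑ j ∈ Finset.range (k-1), D (j+1) := by
      refine Finset.sum_equiv (Equiv.swap (l-1) l) ?_ (fun i _ => rfl)
      intro j
      rcases eq_or_ne j (l-1) with rfl | h1
      · simp only [Equiv.swap_apply_left, Finset.mem_range]; omega
      · rcases eq_or_ne j l with h2 | h2
        · rw [h2]
          simp only [Equiv.swap_apply_right, Finset.mem_range]; omega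
        · rw [Equiv.swap_apply_of_ne_of_ne h1 h2]
    rw [Finset.sum_congr rfl hswap, ← Finset.sum_mul, hsum, Finset.sum_mul]
  · -- t l
    have hmem1 : l - 1 ∈ Finset.range (k-1) := by
      simp only [Finset.mem_range]; omega
    have hmem2 : l ∈ (Finset.range (k-1)).erase (l-1) := by
      simp only [Finset.mem_erase, Finset.mem_range]
      constructor
      · omega
      · omega
    have hS : ∑ j ∈ Finset.range (k-1), D (j+1)
        = (D l + D (l+1)) + ∑ j ∈ ((Finset.range (k-1)).erase (l-1)).erase l, D (j+1) := by
      rw [← Finset.add_sum_erase _ _ hmem1, ← Finset.add_sum_erase _ _ hmem2,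
        show l - 1 + 1 = l from by omega, ← add_assoc]
    have h0 : tB n N l * (D l + D (l+1)) = 0 := by
      rw [hD]
      simp only [mul_add, mul_sub]
      rw [Tsp1 l k hl1 hlk hkn, Tsp2 l k hl1 hlk hkn]
      abel
    have h0' : (D l + D (l+1)) * tB n N l = 0 := by
      rw [hD]
      simp only [add_mul, sub_mul]
      rw [Tsp3 l k hl1 hlk hkn, Tsp4 l k hl1 hlk hkn]
      abel
    have hterm : ∀ j ∈ ((Finset.range (k-1)).erase (l-1)).erase l,
        tB n N l * D (j+1) = D (j+1) * tB n N l := by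
      intro j hj
      simp only [Finset.mem_erase, Finset.mem_range] at hj
      exact (hDcomm (j+1) (by omega) (by omega) (by omega) (by omega)).2
    rw [xB, mul_add, add_mul, ← Algebra.commutes ((N - 1) / 2) (tB n N l)]
    congr 1
    rw [hS, mul_add, add_mul, h0, h0', Finset.mul_sum, Finset.sum_mul,
      Finset.sum_congr rfl hterm]

end Core

/-- In `B(n,N)`, for every `k = 2,…,n` the Jucys–Murphy
element `x_k` commutes with every element of the subalgebra `B(k−1,N)`. -/
theorem jucysMurphy_commutes_with_subalgebra (n : ℕ) (N : ℂ) (k : ℕ)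
    (hk : 2 ≤ k) (hkn : k ≤ n) :
    ∀ b ∈ Bsub n N (k - 1), xB n N k * b = b * xB n N k := by
  intro b hb
  rw [Bsub] at hb
  induction hb using Algebra.adjoin_induction with
  | mem x hx =>
    obtain ⟨m, hm1, hm2, rfl | rfl⟩ := hx
    · exact (core k m hk hkn hm1 (by omega)).1.symm
    · exact (core k m hk hkn hm1 (by omega)).2.symm
  | algebraMap r => exact (Algebra.commutes r (xB n N k)).symm
  | add x y hx hy px py => rw [mul_add, add_mul, px, py]
  | mul x y hx hy px py => rw [← mul_assoc, px, mul_assoc, py, ← mul_assoc]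
end
end

section
/- The Jucys–Murphy elements x_1,…,x_n of the Brauer algebra B(n,N) pairwise commute. -/
noncomputable section

open scoped BigOperators

/-!
Write `x_k = (N - 1)/2 + y_k` with `y_k = Σ_{i<k} ((i,k) - ov(i,k))`. For `r + 1 < l`, the
element `y_l` commutes with `s_r` and `t_r`: the terms with `i ∉ {r, r+1}` commute with both
generators (a braid-type computation when `i < r`), conjugation by `s_r` swaps the terms
`i = r` and `i = r + 1`, and `t_r` annihilates their sum from both sides. Hence `y_l`
centralizes the subalgebra `B(l-1)`, which contains `y_k` for every `k < l`.
-/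

namespace BrauerAlgebra

variable {n : ℕ} {N : ℂ}

section Monoid

variable {M : Type*} [Monoid M]

theorem conj_mul_conj {u p q a : M} (hp : Commute p u) (hq : Commute u q) :
    p * (u * a * u) * q = u * (p * a * q) * u := by
  calc p * (u * a * u) * q = (p * u) * a * (u * q) := by simp only [mul_assoc]
    _ = (u * p) * a * (q * u) := by rw [hp.eq, hq.eq]
    _ = u * (p * a * q) * u := by simp only [mul_assoc]

theorem conj_conj_of_mul_self {u a : M} (hu : u * u = 1) : u * (u * a * u) * u = a := by
  simp only [← mul_assoc, hu, one_mul]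
  rw [mul_assoc, hu, mul_one]

theorem commute_conj_of_braid {b c a : M} (hbc : b * c * b = c * b * c) (hca : Commute c a) :
    Commute b (c * (b * a * b) * c) := by
  calc b * (c * (b * a * b) * c) = (b * c * b) * a * (b * c) := by simp only [mul_assoc]
    _ = c * b * (c * a) * (b * c) := by rw [hbc]; simp only [mul_assoc]
    _ = c * b * a * (c * b * c) := by rw [hca.eq]; simp only [mul_assoc]
    _ = c * (b * a * b) * c * b := by rw [← hbc]; simp only [mul_assoc]

end Monoid

section Ring

variable {R : Type*} [Ring R] {s t a b : R}

theorem commute_sub_add_conj_sub (hs : s * s = 1) :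
    Commute s (a - b + (s * a * s - s * b * s)) := by
  have hsas : s * (s * a * s) = a * s := by rw [← mul_assoc, ← mul_assoc, hs, one_mul]
  have hsbs : s * (s * b * s) = b * s := by rw [← mul_assoc, ← mul_assoc, hs, one_mul]
  have hsas' : s * a * s * s = s * a := by rw [mul_assoc, hs, mul_one]
  have hsbs' : s * b * s * s = s * b := by rw [mul_assoc, hs, mul_one]
  show _ = _
  simp only [mul_add, mul_sub, add_mul, sub_mul, hsas, hsbs, hsas', hsbs']
  abel

/-- `t` annihilates `a - b + s (a - b) s` from both sides. -/
theorem commute_sub_add_conj_sub_of_absorb (hs : s * s = 1) (hst : s * t = t) (hts : t * s = t)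
    (hl : t * a * s = t * b) (hr : s * a * t = b * t) :
    Commute t (a - b + (s * a * s - s * b * s)) := by
  have h₁ : t * (s * a * s) = t * b := by rw [← mul_assoc, ← mul_assoc, hts, hl]
  have h₂ : t * (s * b * s) = t * a := by
    rw [← mul_assoc, ← mul_assoc, hts, ← hl, mul_assoc _ s s, hs, mul_one]
  have h₃ : s * a * s * t = b * t := by rw [mul_assoc, hst, hr]
  have h₄ : s * b * s * t = a * t := by
    rw [mul_assoc, hst, mul_assoc, ← hr, ← mul_assoc, ← mul_assoc, hs, one_mul]
  show _ = _
  simp only [mul_add, mul_sub, add_mul, sub_mul, h₁, h₂, h₃, h₄]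
  abel

end Ring

theorem mem_centralizer_singleton {R A : Type*} [CommSemiring R] [Semiring A] [Algebra R A]
    {x y : A} : x ∈ Subalgebra.centralizer R {y} ↔ Commute y x := by
  simp [Subalgebra.mem_centralizer_iff, Commute, SemiconjBy]

section Relations

variable {k : ℕ}

theorem sB_mul_self (hk : 1 ≤ k) (hkn : k < n) : sB n N k * sB n N k = 1 := by
  simpa only [map_mul, map_one, sB] using
    RingQuot.mkAlgHom_rel ℂ (BrauerRel.s_sq (N := N) k ⟨hk, by omega⟩)

theorem sB_mul_tB (hk : 1 ≤ k) (hkn : k < n) : sB n N k * tB n N k = tB n N k := by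
  simpa only [map_mul, sB, tB] using
    RingQuot.mkAlgHom_rel ℂ (BrauerRel.st (N := N) k ⟨hk, by omega⟩)

theorem tB_mul_sB (hk : 1 ≤ k) (hkn : k < n) : tB n N k * sB n N k = tB n N k := by
  simpa only [map_mul, sB, tB] using
    RingQuot.mkAlgHom_rel ℂ (BrauerRel.ts (N := N) k ⟨hk, by omega⟩)

theorem sB_braid (hk : 1 ≤ k) (hkn : k + 2 ≤ n) :
    sB n N k * sB n N (k + 1) * sB n N k = sB n N (k + 1) * sB n N k * sB n N (k + 1) := by
  simpa only [map_mul, sB] using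
    RingQuot.mkAlgHom_rel ℂ (BrauerRel.braid (N := N) k ⟨hk, by omega⟩)

theorem tB_mul_tB_succ_mul_tB (hk : 1 ≤ k) (hkn : k + 2 ≤ n) :
    tB n N k * tB n N (k + 1) * tB n N k = tB n N k := by
  simpa only [map_mul, tB] using
    RingQuot.mkAlgHom_rel ℂ (BrauerRel.ttt_lo (N := N) k ⟨hk, by omega⟩)

theorem tB_succ_mul_tB_mul_tB_succ (hk : 1 ≤ k) (hkn : k + 2 ≤ n) :
    tB n N (k + 1) * tB n N k * tB n N (k + 1) = tB n N (k + 1) := by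
  simpa only [map_mul, tB] using
    RingQuot.mkAlgHom_rel ℂ (BrauerRel.ttt_hi (N := N) k ⟨hk, by omega⟩)

theorem sB_mul_tB_succ_mul_tB (hk : 1 ≤ k) (hkn : k + 2 ≤ n) :
    sB n N k * tB n N (k + 1) * tB n N k = sB n N (k + 1) * tB n N k := by
  simpa only [map_mul, sB, tB] using
    RingQuot.mkAlgHom_rel ℂ (BrauerRel.stt (N := N) k ⟨hk, by omega⟩)

theorem tB_succ_mul_tB_mul_sB_succ (hk : 1 ≤ k) (hkn : k + 2 ≤ n) :
    tB n N (k + 1) * tB n N k * sB n N (k + 1) = tB n N (k + 1) * sB n N k := by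
  simpa only [map_mul, sB, tB] using
    RingQuot.mkAlgHom_rel ℂ (BrauerRel.tts (N := N) k ⟨hk, by omega⟩)

theorem tB_mul_tB_succ_mul_sB (hk : 1 ≤ k) (hkn : k + 2 ≤ n) :
    tB n N k * tB n N (k + 1) * sB n N k = tB n N k * sB n N (k + 1) := by
  calc tB n N k * tB n N (k + 1) * sB n N k
      = tB n N k * tB n N (k + 1) * tB n N k * sB n N (k + 1) := by
        simp only [mul_assoc, tB_succ_mul_tB_mul_sB_succ hk hkn]
    _ = tB n N k * sB n N (k + 1) := by rw [tB_mul_tB_succ_mul_tB hk hkn]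

theorem sB_succ_mul_tB_mul_tB_succ (hk : 1 ≤ k) (hkn : k + 2 ≤ n) :
    sB n N (k + 1) * tB n N k * tB n N (k + 1) = sB n N k * tB n N (k + 1) := by
  calc sB n N (k + 1) * tB n N k * tB n N (k + 1)
      = sB n N k * (tB n N (k + 1) * tB n N k * tB n N (k + 1)) := by
        rw [← sB_mul_tB_succ_mul_tB hk hkn]; simp only [mul_assoc]
    _ = sB n N k * tB n N (k + 1) := by rw [tB_succ_mul_tB_mul_tB_succ hk hkn]

theorem tB_mul_sB_succ_mul_tB (hk : 1 ≤ k) (hkn : k + 2 ≤ n) :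
    tB n N k * sB n N (k + 1) * tB n N k = tB n N k := by
  rw [← tB_mul_tB_succ_mul_sB hk hkn, mul_assoc _ (sB n N k), sB_mul_tB hk (by omega),
    tB_mul_tB_succ_mul_tB hk hkn]

theorem tB_mul_sB_succ_mul_sB (hk : 1 ≤ k) (hkn : k + 2 ≤ n) :
    tB n N k * sB n N (k + 1) * sB n N k = tB n N k * tB n N (k + 1) := by
  rw [← tB_mul_tB_succ_mul_sB hk hkn, mul_assoc _ (sB n N k), sB_mul_self hk (by omega),
    mul_one]

theorem tB_succ_mul_sB_mul_sB_succ (hk : 1 ≤ k) (hkn : k + 2 ≤ n) :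
    tB n N (k + 1) * sB n N k * sB n N (k + 1) = tB n N (k + 1) * tB n N k := by
  rw [← tB_succ_mul_tB_mul_sB_succ hk hkn, mul_assoc _ (sB n N (k + 1)),
    sB_mul_self (by omega) (by omega), mul_one]

theorem sB_mul_sB_succ_mul_tB (hk : 1 ≤ k) (hkn : k + 2 ≤ n) :
    sB n N k * sB n N (k + 1) * tB n N k = tB n N (k + 1) * tB n N k := by
  rw [mul_assoc, ← sB_mul_tB_succ_mul_tB hk hkn, ← mul_assoc, ← mul_assoc,
    sB_mul_self hk (by omega), one_mul]

theorem sB_succ_mul_sB_mul_tB_succ (hk : 1 ≤ k) (hkn : k + 2 ≤ n) :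
    sB n N (k + 1) * sB n N k * tB n N (k + 1) = tB n N k * tB n N (k + 1) := by
  rw [mul_assoc, ← sB_succ_mul_tB_mul_tB_succ hk hkn, ← mul_assoc, ← mul_assoc,
    sB_mul_self (by omega) (by omega), one_mul]

theorem sB_succ_mul_tB_mul_sB_succ (hk : 1 ≤ k) (hkn : k + 2 ≤ n) :
    sB n N (k + 1) * tB n N k * sB n N (k + 1) = sB n N k * tB n N (k + 1) * sB n N k := by
  rw [← sB_mul_tB_succ_mul_tB hk hkn, mul_assoc _ (tB n N k), mul_assoc (sB n N k),
    ← mul_assoc (tB n N (k + 1)), tB_succ_mul_tB_mul_sB_succ hk hkn, mul_assoc]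

end Relations

theorem sB_eq_zero {k : ℕ} (h : ¬(1 ≤ k ∧ k ≤ n - 1)) : sB n N k = 0 := by
  rw [sB, bS, dif_neg h, map_zero]

theorem tB_eq_zero {k : ℕ} (h : ¬(1 ≤ k ∧ k ≤ n - 1)) : tB n N k = 0 := by
  rw [tB, bT, dif_neg h, map_zero]

def IsGenerator (G : ℕ → BrauerAlgebra n N) : Prop := G = sB n N ∨ G = tB n N

theorem IsGenerator.commute {G H : ℕ → BrauerAlgebra n N} (hG : IsGenerator G)
    (hH : IsGenerator H) {k l : ℕ} (h : k + 1 < l ∨ l + 1 < k) : Commute (G k) (H l) := by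
  by_cases hk : 1 ≤ k ∧ k ≤ n - 1
  · by_cases hl : 1 ≤ l ∧ l ≤ n - 1
    · have hkl :
          1 ≤ k ∧ k ≤ n - 1 ∧ 1 ≤ l ∧ l ≤ n - 1 ∧ (k + 1 < l ∨ l + 1 < k) :=
        ⟨hk.1, hk.2, hl.1, hl.2, h⟩
      show G k * H l = H l * G k
      rcases hG with rfl | rfl <;> rcases hH with rfl | rfl
      · simpa only [map_mul, sB] using
          RingQuot.mkAlgHom_rel ℂ (BrauerRel.ss_comm (N := N) k l hkl)
      · simpa only [map_mul, sB, tB] using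
          (RingQuot.mkAlgHom_rel ℂ (BrauerRel.ts_comm (N := N) l k
            ⟨hl.1, hl.2, hk.1, hk.2, h.symm⟩)).symm
      · simpa only [map_mul, sB, tB] using
          RingQuot.mkAlgHom_rel ℂ (BrauerRel.ts_comm (N := N) k l hkl)
      · simpa only [map_mul, tB] using
          RingQuot.mkAlgHom_rel ℂ (BrauerRel.tt_comm (N := N) k l hkl)
    · rcases hH with rfl | rfl <;> simp [sB_eq_zero, tB_eq_zero, hl]
  · rcases hG with rfl | rfl <;> simp [sB_eq_zero, tB_eq_zero, hk]

theorem isGenerator_sB : IsGenerator (sB n N) := Or.inl rfl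

theorem isGenerator_tB : IsGenerator (tB n N) := Or.inr rfl

theorem IsGenerator.conj_sB_succ {H : ℕ → BrauerAlgebra n N} (hH : IsGenerator H) {i : ℕ}
    (hi : 1 ≤ i) (hin : i + 2 ≤ n) :
    sB n N (i + 1) * H i * sB n N (i + 1) = sB n N i * H (i + 1) * sB n N i := by
  rcases hH with rfl | rfl
  exacts [(sB_braid hi hin).symm, sB_succ_mul_tB_mul_sB_succ hi hin]

theorem IsGenerator.commute_conj {G : ℕ → BrauerAlgebra n N} (hG : IsGenerator G) {r : ℕ}
    (hr : 1 ≤ r) (hrn : r + 2 ≤ n) {a : BrauerAlgebra n N} (ha : Commute a (G (r + 1))) :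
    Commute (G r) (sB n N (r + 1) * (sB n N r * a * sB n N r) * sB n N (r + 1)) := by
  rcases hG with rfl | rfl
  · exact commute_conj_of_braid (sB_braid hr hrn) ha.symm
  have hleft : tB n N r * (sB n N (r + 1) * (sB n N r * a * sB n N r) * sB n N (r + 1))
      = tB n N r * a * (tB n N (r + 1) * tB n N r) := by
    calc _ = (tB n N r * sB n N (r + 1) * sB n N r) * a * (sB n N r * sB n N (r + 1)) := by
          simp only [mul_assoc]
      _ = tB n N r * (tB n N (r + 1) * a) * (sB n N r * sB n N (r + 1)) := by
          rw [tB_mul_sB_succ_mul_sB hr hrn]; simp only [mul_assoc]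
      _ = tB n N r * a * (tB n N (r + 1) * sB n N r * sB n N (r + 1)) := by
          rw [← ha.eq]; simp only [mul_assoc]
      _ = _ := by rw [tB_succ_mul_sB_mul_sB_succ hr hrn]
  have hright : sB n N (r + 1) * (sB n N r * a * sB n N r) * sB n N (r + 1) * tB n N r
      = tB n N r * a * (tB n N (r + 1) * tB n N r) := by
    calc _ = (sB n N (r + 1) * sB n N r) * a * (sB n N r * sB n N (r + 1) * tB n N r) := by
          simp only [mul_assoc]
      _ = (sB n N (r + 1) * sB n N r) * (a * tB n N (r + 1)) * tB n N r := by
          rw [sB_mul_sB_succ_mul_tB hr hrn]; simp only [mul_assoc]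
      _ = (sB n N (r + 1) * sB n N r * tB n N (r + 1)) * a * tB n N r := by
          rw [ha.eq]; simp only [mul_assoc]
      _ = _ := by
          rw [sB_succ_mul_sB_mul_tB_succ hr hrn, mul_assoc (tB n N r), ← ha.eq]
          simp only [mul_assoc]
  exact hleft.trans hright.symm

def conjSigma (i j : ℕ) (a : BrauerAlgebra n N) : BrauerAlgebra n N :=
  sigmaB n N i j * a * sigmaBInv n N i j

theorem transpB_eq_conjSigma (i j : ℕ) : transpB n N i j = conjSigma i j (sB n N i) := rfl

theorem ovB_eq_conjSigma (i j : ℕ) : ovB n N i j = conjSigma i j (tB n N i) := rfl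

theorem conjSigma_self (i : ℕ) (a : BrauerAlgebra n N) : conjSigma i (i + 1) a = a := by
  simp [conjSigma, sigmaB, sigmaBInv]

theorem conjSigma_succ_right {i j : ℕ} (hij : i < j) (a : BrauerAlgebra n N) :
    conjSigma i (j + 1) a = sB n N j * conjSigma i j a * sB n N j := by
  have hlen : j + 1 - 1 - i = (j - 1 - i) + 1 := by omega
  have hsigma : sigmaB n N i (j + 1) = sB n N j * sigmaB n N i j := by
    rw [sigmaB, hlen, List.range_succ_eq_map, List.map_cons, List.prod_cons, List.map_map, sigmaB]
    congr 2
    exact List.map_congr_left fun m _ => congrArg (sB n N) (by omega)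
  have hsigmaInv : sigmaBInv n N i (j + 1) = sigmaBInv n N i j * sB n N j := by
    rw [sigmaBInv, hlen, List.range_succ, List.map_append, List.prod_append]
    simp [show i + 1 + (j - 1 - i) = j by omega, sigmaBInv]
  simp only [conjSigma, hsigma, hsigmaInv, mul_assoc]

theorem conjSigma_mem (S : Subalgebra ℂ (BrauerAlgebra n N)) {i j : ℕ} (hij : i < j)
    {a : BrauerAlgebra n N} (ha : a ∈ S) (hs : ∀ m, i < m → m < j → sB n N m ∈ S) :
    conjSigma i j a ∈ S := by
  induction j, hij using Nat.le_induction with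
  | base => rwa [conjSigma_self]
  | succ j hij ih =>
    rw [conjSigma_succ_right hij]
    have hj : sB n N j ∈ S := hs j hij (by omega)
    exact S.mul_mem (S.mul_mem hj (ih fun m h1 h2 => hs m h1 (by omega))) hj

theorem commute_conjSigma {i j : ℕ} (hij : i < j) {y a : BrauerAlgebra n N} (ha : Commute y a)
    (hs : ∀ m, i < m → m < j → Commute y (sB n N m)) : Commute y (conjSigma i j a) :=
  mem_centralizer_singleton.1 <| conjSigma_mem _ hij (mem_centralizer_singleton.2 ha)
    fun m h1 h2 => mem_centralizer_singleton.2 (hs m h1 h2)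

theorem IsGenerator.conjSigma_succ_left {H : ℕ → BrauerAlgebra n N} (hH : IsGenerator H)
    {i j : ℕ} (hi : 1 ≤ i) (hin : i + 2 ≤ n) (hij : i + 2 ≤ j) :
    conjSigma (i + 1) j (H (i + 1)) = sB n N i * conjSigma i j (H i) * sB n N i := by
  induction j, hij using Nat.le_induction with
  | base =>
    rw [conjSigma_self, conjSigma_succ_right (by omega), conjSigma_self, hH.conj_sB_succ hi hin,
      conj_conj_of_mul_self (sB_mul_self hi (by omega))]
  | succ j hij ih =>
    have hc : Commute (sB n N j) (sB n N i) := isGenerator_sB.commute isGenerator_sB (by omega)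
    rw [conjSigma_succ_right (by omega), conjSigma_succ_right (by omega), ih,
      conj_mul_conj hc hc.symm]

theorem IsGenerator.commute_conjSigma_of_lt_of_lt {G H : ℕ → BrauerAlgebra n N}
    (hG : IsGenerator G) (hH : IsGenerator H) {i r j : ℕ} (hi : 1 ≤ i) (hir : i < r)
    (hrj : r + 2 ≤ j) (hjn : j ≤ n) : Commute (G r) (conjSigma i j (H i)) := by
  induction j, hrj using Nat.le_induction with
  | base =>
    refine Nat.decreasingInduction' (P := fun i => Commute (G r) (conjSigma i (r + 2) (H i)))
      (fun k hk hik ih => ?_) (show i ≤ r - 1 by omega) ?_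
    · have hs : Commute (G r) (sB n N k) := hG.commute isGenerator_sB (by omega)
      have hss : sB n N k * sB n N k = 1 := sB_mul_self (by omega) (by omega)
      rw [← conj_conj_of_mul_self hss (a := conjSigma k (r + 2) (H k)),
        ← hH.conjSigma_succ_left (by omega) (by omega) (by omega)]
      exact (hs.mul_right ih).mul_right hs
    · obtain ⟨p, rfl⟩ : ∃ p, r = p + 1 := ⟨r - 1, by omega⟩
      rw [Nat.add_sub_cancel, show p + 1 + 2 = p + 2 + 1 from rfl, conjSigma_succ_right (by omega),
        conjSigma_succ_right (by omega), conjSigma_self]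
      exact hG.commute_conj (by omega) (by omega) (hH.commute hG (by omega))
  | succ j hrj ih =>
    have hs : Commute (G r) (sB n N j) := hG.commute isGenerator_sB (by omega)
    rw [conjSigma_succ_right (by omega)]
    exact (hs.mul_right (ih (by omega))).mul_right hs

theorem IsGenerator.commute_conjSigma_of_ne {G H : ℕ → BrauerAlgebra n N}
    (hG : IsGenerator G) (hH : IsGenerator H) {i r l : ℕ} (hi : 1 ≤ i) (hil : i < l)
    (hrl : r + 2 ≤ l) (hln : l ≤ n) (h : i < r ∨ r + 1 < i) :
    Commute (G r) (conjSigma i l (H i)) := by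
  rcases h with h | h
  · exact hG.commute_conjSigma_of_lt_of_lt hH hi h hrl hln
  · exact commute_conjSigma hil (hG.commute hH (by omega))
      fun m h1 _ => hG.commute isGenerator_sB (by omega)

theorem tB_mul_transpB_mul_sB {r j : ℕ} (hr : 1 ≤ r) (hrj : r + 2 ≤ j) (hjn : j ≤ n) :
    tB n N r * transpB n N r j * sB n N r = tB n N r * ovB n N r j := by
  induction j, hrj using Nat.le_induction with
  | base =>
    rw [transpB_eq_conjSigma, ovB_eq_conjSigma, show r + 2 = r + 1 + 1 from rfl,
      conjSigma_succ_right (j := r + 1) (by omega), conjSigma_succ_right (j := r + 1) (by omega),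
      conjSigma_self, conjSigma_self, ← sB_braid hr hjn]
    simp only [← mul_assoc]
    rw [tB_mul_sB hr (by omega), mul_assoc _ (sB n N r), sB_mul_self hr (by omega), mul_one,
      tB_mul_sB_succ_mul_tB hr hjn]
  | succ j hrj ih =>
    have hs : Commute (sB n N j) (sB n N r) := isGenerator_sB.commute isGenerator_sB (by omega)
    have ht : Commute (tB n N r) (sB n N j) := isGenerator_tB.commute isGenerator_sB (by omega)
    rw [transpB_eq_conjSigma, ovB_eq_conjSigma, conjSigma_succ_right (by omega),
      conjSigma_succ_right (by omega), conj_mul_conj ht hs, ← transpB_eq_conjSigma,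
      ← ovB_eq_conjSigma, ih (by omega)]
    simpa using (conj_mul_conj ht (Commute.one_right _)).symm

theorem sB_mul_transpB_mul_tB {r j : ℕ} (hr : 1 ≤ r) (hrj : r + 2 ≤ j) (hjn : j ≤ n) :
    sB n N r * transpB n N r j * tB n N r = ovB n N r j * tB n N r := by
  induction j, hrj using Nat.le_induction with
  | base =>
    rw [transpB_eq_conjSigma, ovB_eq_conjSigma, show r + 2 = r + 1 + 1 from rfl,
      conjSigma_succ_right (j := r + 1) (by omega), conjSigma_succ_right (j := r + 1) (by omega),
      conjSigma_self, conjSigma_self, ← sB_braid hr hjn]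
    simp only [← mul_assoc]
    rw [sB_mul_self hr (by omega), one_mul, mul_assoc _ (sB n N r), sB_mul_tB hr (by omega),
      mul_assoc (sB n N (r + 1)) (tB n N r), mul_assoc (sB n N (r + 1)),
      tB_mul_sB_succ_mul_tB hr hjn]
  | succ j hrj ih =>
    have hs : Commute (sB n N r) (sB n N j) := isGenerator_sB.commute isGenerator_sB (by omega)
    have ht : Commute (sB n N j) (tB n N r) := isGenerator_sB.commute isGenerator_tB (by omega)
    rw [transpB_eq_conjSigma, ovB_eq_conjSigma, conjSigma_succ_right (by omega),
      conjSigma_succ_right (by omega), conj_mul_conj hs ht, ← transpB_eq_conjSigma,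
      ← ovB_eq_conjSigma, ih (by omega)]
    simpa using (conj_mul_conj (Commute.one_left _) ht).symm

theorem IsGenerator.commute_transpB_sub_ovB_add {G : ℕ → BrauerAlgebra n N} (hG : IsGenerator G)
    {r j : ℕ} (hr : 1 ≤ r) (hrj : r + 2 ≤ j) (hjn : j ≤ n) :
    Commute (G r) (transpB n N r j - ovB n N r j
      + (transpB n N (r + 1) j - ovB n N (r + 1) j)) := by
  rw [transpB_eq_conjSigma (r + 1), ovB_eq_conjSigma (r + 1),
    isGenerator_sB.conjSigma_succ_left hr (by omega) hrj,
    isGenerator_tB.conjSigma_succ_left hr (by omega) hrj, ← transpB_eq_conjSigma,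
    ← ovB_eq_conjSigma]
  rcases hG with rfl | rfl
  · exact commute_sub_add_conj_sub (sB_mul_self hr (by omega))
  · exact commute_sub_add_conj_sub_of_absorb (sB_mul_self hr (by omega)) (sB_mul_tB hr (by omega))
      (tB_mul_sB hr (by omega)) (tB_mul_transpB_mul_sB hr hrj hjn)
      (sB_mul_transpB_mul_tB hr hrj hjn)

def transpOvSum (n : ℕ) (N : ℂ) (k : ℕ) : BrauerAlgebra n N :=
  ∑ l ∈ Finset.range (k - 1), (transpB n N (l + 1) k - ovB n N (l + 1) k)

theorem xB_eq_algebraMap_add (k : ℕ) :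
    xB n N k = algebraMap ℂ (BrauerAlgebra n N) ((N - 1) / 2) + transpOvSum n N k := rfl

theorem IsGenerator.commute_transpOvSum {G : ℕ → BrauerAlgebra n N} (hG : IsGenerator G)
    {r l : ℕ} (hr : 1 ≤ r) (hrl : r + 2 ≤ l) (hln : l ≤ n) :
    Commute (G r) (transpOvSum n N l) := by
  have hterm : ∀ i, 1 ≤ i → i < l → (i < r ∨ r + 1 < i) →
      Commute (G r) (transpB n N i l - ovB n N i l) := fun i hi hil h =>
    (hG.commute_conjSigma_of_ne isGenerator_sB hi hil hrl hln h).sub_right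
      (hG.commute_conjSigma_of_ne isGenerator_tB hi hil hrl hln h)
  obtain ⟨p, rfl⟩ : ∃ p, r = p + 1 := ⟨r - 1, by omega⟩
  obtain ⟨q, hq⟩ : ∃ q, l - 1 = p + 2 + q := ⟨l - 1 - (p + 2), by omega⟩
  rw [transpOvSum, hq, Finset.sum_range_add, Finset.sum_range_succ, Finset.sum_range_succ,
    add_assoc (∑ _ ∈ _, _)]
  refine ((Commute.sum_right _ _ _ fun i hi => ?_).add_right
    (hG.commute_transpB_sub_ovB_add hr hrl hln)).add_right
    (Commute.sum_right _ _ _ fun i hi => ?_) <;>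
  rw [Finset.mem_range] at hi <;> exact hterm _ (by omega) (by omega) (by omega)

theorem sB_mem_Bsub {k m : ℕ} (hk : 1 ≤ k) (hkm : k < m) : sB n N k ∈ Bsub n N m :=
  Algebra.subset_adjoin ⟨k, hk, by omega, Or.inl rfl⟩

theorem tB_mem_Bsub {k m : ℕ} (hk : 1 ≤ k) (hkm : k < m) : tB n N k ∈ Bsub n N m :=
  Algebra.subset_adjoin ⟨k, hk, by omega, Or.inr rfl⟩

theorem Bsub_mono {k m : ℕ} (h : k ≤ m) : Bsub n N k ≤ Bsub n N m :=
  Algebra.adjoin_mono fun _ ⟨i, hi, hik, hx⟩ => ⟨i, hi, by omega, hx⟩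

theorem transpOvSum_mem_Bsub (k : ℕ) : transpOvSum n N k ∈ Bsub n N k := by
  refine Subalgebra.sum_mem _ fun i hi => ?_
  rw [Finset.mem_range] at hi
  have hs : ∀ m, i + 1 < m → m < k → sB n N m ∈ Bsub n N k :=
    fun m h1 h2 => sB_mem_Bsub (by omega) h2
  exact Subalgebra.sub_mem _ (conjSigma_mem _ (by omega) (sB_mem_Bsub (by omega) (by omega)) hs)
    (conjSigma_mem _ (by omega) (tB_mem_Bsub (by omega) (by omega)) hs)

theorem Bsub_le_centralizer_transpOvSum {l : ℕ} (hln : l ≤ n) :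
    Bsub n N (l - 1) ≤ Subalgebra.centralizer ℂ {transpOvSum n N l} := by
  refine Algebra.adjoin_le ?_
  rintro _ ⟨r, hr, hrl, rfl | rfl⟩ <;> refine mem_centralizer_singleton.2 (Commute.symm ?_)
  exacts [isGenerator_sB.commute_transpOvSum hr (by omega) hln,
    isGenerator_tB.commute_transpOvSum hr (by omega) hln]

theorem commute_transpOvSum_of_lt {k l : ℕ} (hkl : k < l) (hln : l ≤ n) :
    Commute (transpOvSum n N k) (transpOvSum n N l) :=
  (mem_centralizer_singleton.1 <| Bsub_le_centralizer_transpOvSum hln <|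
    Bsub_mono (by omega) (transpOvSum_mem_Bsub k)).symm

end BrauerAlgebra

theorem jucysMurphy_commute_general (n : ℕ) (N : ℂ) (k l : ℕ)
    (hkn : k ≤ n) (hln : l ≤ n) :
    xB n N k * xB n N l = xB n N l * xB n N k := by
  have hsum : Commute (BrauerAlgebra.transpOvSum n N k) (BrauerAlgebra.transpOvSum n N l) := by
    rcases lt_trichotomy k l with hkl | rfl | hlk
    · exact BrauerAlgebra.commute_transpOvSum_of_lt hkl hln
    · exact Commute.refl _
    · exact (BrauerAlgebra.commute_transpOvSum_of_lt hlk hkn).symm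
  rw [BrauerAlgebra.xB_eq_algebraMap_add, BrauerAlgebra.xB_eq_algebraMap_add]
  exact ((Algebra.commute_algebraMap_left _ _).add_left
    ((Algebra.commute_algebraMap_right _ _).add_right hsum)).eq

/-- The Jucys–Murphy elements `x₁,…,xₙ` of the Brauer
algebra `B(n,N)` pairwise commute. -/
theorem jucysMurphy_commute (n : ℕ) (N : ℂ) (k l : ℕ)
    (hk1 : 1 ≤ k) (hkn : k ≤ n) (hl1 : 1 ≤ l) (hln : l ≤ n) :
    xB n N k * xB n N l = xB n N l * xB n N k :=
  jucysMurphy_commute_general n N k l hkn hln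
end
end

section
/- In the Brauer algebra B(n,N) the following relations hold for all admissible indices: s_k x_l = x_l s_k and t_k x_l = x_l t_k whenever l ≠ k, k+1; s_k x_k − x_{k+1} s_k = t_k − 1 and s_k x_{k+1} − x_k s_k = 1 − t_k; and t_k (x_k + x_{k+1}) = 0 and (x_k + x_{k+1}) t_k = 0. -/
noncomputable section

open scoped BigOperators

namespace BrauerAux

variable {n : ℕ} {N : ℂ}

lemma sB_zero {k : ℕ} (h : ¬(1 ≤ k ∧ k ≤ n - 1)) : sB n N k = 0 := by
  rw [sB, bS, dif_neg h, map_zero]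

lemma tB_zero {k : ℕ} (h : ¬(1 ≤ k ∧ k ≤ n - 1)) : tB n N k = 0 := by
  rw [tB, bT, dif_neg h, map_zero]

lemma rel {a b} (h : BrauerRel n N a b) :
    RingQuot.mkAlgHom ℂ (BrauerRel n N) a = RingQuot.mkAlgHom ℂ (BrauerRel n N) b :=
  RingQuot.mkAlgHom_rel ℂ h

lemma ss {k} (h : 1 ≤ k ∧ k ≤ n - 1) : sB n N k * sB n N k = 1 := by
  simpa only [sB, map_mul, map_one] using rel (BrauerRel.s_sq (N := N) k h)

lemma tt {k} (h : 1 ≤ k ∧ k ≤ n - 1) : tB n N k * tB n N k = N • tB n N k := by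
  simpa only [tB, map_mul, map_smul] using rel (BrauerRel.t_sq (N := N) k h)

lemma st {k} (h : 1 ≤ k ∧ k ≤ n - 1) : sB n N k * tB n N k = tB n N k := by
  simpa only [sB, tB, map_mul] using rel (BrauerRel.st (N := N) k h)

lemma ts {k} (h : 1 ≤ k ∧ k ≤ n - 1) : tB n N k * sB n N k = tB n N k := by
  simpa only [sB, tB, map_mul] using rel (BrauerRel.ts (N := N) k h)

lemma braid {k} (h : 1 ≤ k ∧ k + 1 ≤ n - 1) :
    sB n N k * sB n N (k+1) * sB n N k = sB n N (k+1) * sB n N k * sB n N (k+1) := by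
  simpa only [sB, map_mul] using rel (BrauerRel.braid (N := N) k h)

lemma ttt_lo {k} (h : 1 ≤ k ∧ k + 1 ≤ n - 1) :
    tB n N k * tB n N (k+1) * tB n N k = tB n N k := by
  simpa only [tB, map_mul] using rel (BrauerRel.ttt_lo (N := N) k h)

lemma ttt_hi {k} (h : 1 ≤ k ∧ k + 1 ≤ n - 1) :
    tB n N (k+1) * tB n N k * tB n N (k+1) = tB n N (k+1) := by
  simpa only [tB, map_mul] using rel (BrauerRel.ttt_hi (N := N) k h)

lemma stt {k} (h : 1 ≤ k ∧ k + 1 ≤ n - 1) :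
    sB n N k * tB n N (k+1) * tB n N k = sB n N (k+1) * tB n N k := by
  simpa only [sB, tB, map_mul] using rel (BrauerRel.stt (N := N) k h)

lemma tts {k} (h : 1 ≤ k ∧ k + 1 ≤ n - 1) :
    tB n N (k+1) * tB n N k * sB n N (k+1) = tB n N (k+1) * sB n N k := by
  simpa only [sB, tB, map_mul] using rel (BrauerRel.tts (N := N) k h)

lemma c_ss {k l} (h : k + 1 < l ∨ l + 1 < k) :
    sB n N k * sB n N l = sB n N l * sB n N k := by
  by_cases hk : 1 ≤ k ∧ k ≤ n - 1
  · by_cases hl : 1 ≤ l ∧ l ≤ n - 1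
    · simpa only [sB, map_mul] using
        rel (BrauerRel.ss_comm (N := N) k l ⟨hk.1, hk.2, hl.1, hl.2, h⟩)
    · rw [sB_zero hl, mul_zero, zero_mul]
  · rw [sB_zero hk, mul_zero, zero_mul]

lemma c_ts {k l} (h : k + 1 < l ∨ l + 1 < k) :
    tB n N k * sB n N l = sB n N l * tB n N k := by
  by_cases hk : 1 ≤ k ∧ k ≤ n - 1
  · by_cases hl : 1 ≤ l ∧ l ≤ n - 1
    · simpa only [sB, tB, map_mul] using
        rel (BrauerRel.ts_comm (N := N) k l ⟨hk.1, hk.2, hl.1, hl.2, h⟩)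
    · rw [sB_zero hl, mul_zero, zero_mul]
  · rw [tB_zero hk, mul_zero, zero_mul]

lemma c_tt {k l} (h : k + 1 < l ∨ l + 1 < k) :
    tB n N k * tB n N l = tB n N l * tB n N k := by
  by_cases hk : 1 ≤ k ∧ k ≤ n - 1
  · by_cases hl : 1 ≤ l ∧ l ≤ n - 1
    · simpa only [tB, map_mul] using
        rel (BrauerRel.tt_comm (N := N) k l ⟨hk.1, hk.2, hl.1, hl.2, h⟩)
    · rw [tB_zero hl, mul_zero, zero_mul]
  · rw [tB_zero hk, mul_zero, zero_mul]

lemma c_st {k l} (h : k + 1 < l ∨ l + 1 < k) :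
    sB n N k * tB n N l = tB n N l * sB n N k :=
  (c_ts (by omega)).symm


end BrauerAux

namespace BrauerAux2
open BrauerAux

variable {n : ℕ} {N : ℂ}

lemma mul2 {a b c : BrauerAlgebra n N} (h : a * b = c) (x : BrauerAlgebra n N) :
    a * (b * x) = c * x := by rw [← mul_assoc, h]

lemma mul22 {a b c d : BrauerAlgebra n N} (h : a * b = c * d) (x : BrauerAlgebra n N) :
    a * (b * x) = c * (d * x) := by rw [← mul_assoc, h, mul_assoc]

lemma mul3r {a b c d : BrauerAlgebra n N} (h : a * b * c = d) (x : BrauerAlgebra n N) :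
    a * (b * (c * x)) = d * x := by
  rw [← mul_assoc, ← mul_assoc, h]

lemma mul32 {a b c d e : BrauerAlgebra n N} (h : a * b * c = d * e) (x : BrauerAlgebra n N) :
    a * (b * (c * x)) = d * (e * x) := by
  rw [← mul_assoc, ← mul_assoc, h, mul_assoc]

lemma mul33 {a b c d e f : BrauerAlgebra n N} (h : a * b * c = d * e * f)
    (x : BrauerAlgebra n N) : a * (b * (c * x)) = d * (e * (f * x)) := by
  rw [← mul_assoc, ← mul_assoc, h, mul_assoc, mul_assoc]

lemma ss' {k} (h : 1 ≤ k ∧ k ≤ n - 1) (x : BrauerAlgebra n N) :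
    sB n N k * (sB n N k * x) = x := by rw [mul2 (ss h), one_mul]

lemma st' {k} (h : 1 ≤ k ∧ k ≤ n - 1) (x : BrauerAlgebra n N) :
    sB n N k * (tB n N k * x) = tB n N k * x := mul2 (st h) x

lemma ts' {k} (h : 1 ≤ k ∧ k ≤ n - 1) (x : BrauerAlgebra n N) :
    tB n N k * (sB n N k * x) = tB n N k * x := mul2 (ts h) x

lemma braid' {k} (h : 1 ≤ k ∧ k + 1 ≤ n - 1) (x : BrauerAlgebra n N) :
    sB n N k * (sB n N (k+1) * (sB n N k * x))
      = sB n N (k+1) * (sB n N k * (sB n N (k+1) * x)) := mul33 (braid h) x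

lemma ttt_lo' {k} (h : 1 ≤ k ∧ k + 1 ≤ n - 1) (x : BrauerAlgebra n N) :
    tB n N k * (tB n N (k+1) * (tB n N k * x)) = tB n N k * x := mul3r (ttt_lo h) x

lemma ttt_hi' {k} (h : 1 ≤ k ∧ k + 1 ≤ n - 1) (x : BrauerAlgebra n N) :
    tB n N (k+1) * (tB n N k * (tB n N (k+1) * x)) = tB n N (k+1) * x := mul3r (ttt_hi h) x

lemma stt' {k} (h : 1 ≤ k ∧ k + 1 ≤ n - 1) (x : BrauerAlgebra n N) :
    sB n N k * (tB n N (k+1) * (tB n N k * x)) = sB n N (k+1) * (tB n N k * x) :=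
  mul32 (stt h) x

lemma tts' {k} (h : 1 ≤ k ∧ k + 1 ≤ n - 1) (x : BrauerAlgebra n N) :
    tB n N (k+1) * (tB n N k * (sB n N (k+1) * x)) = tB n N (k+1) * (sB n N k * x) :=
  mul32 (tts h) x

lemma c_ss' {k l} (h : k + 1 < l ∨ l + 1 < k) (x : BrauerAlgebra n N) :
    sB n N k * (sB n N l * x) = sB n N l * (sB n N k * x) := mul22 (c_ss h) x

lemma c_ts' {k l} (h : k + 1 < l ∨ l + 1 < k) (x : BrauerAlgebra n N) :
    tB n N k * (sB n N l * x) = sB n N l * (tB n N k * x) := mul22 (c_ts h) x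

lemma c_st' {k l} (h : k + 1 < l ∨ l + 1 < k) (x : BrauerAlgebra n N) :
    sB n N k * (tB n N l * x) = tB n N l * (sB n N k * x) := mul22 (c_st h) x

lemma c_tt' {k l} (h : k + 1 < l ∨ l + 1 < k) (x : BrauerAlgebra n N) :
    tB n N k * (tB n N l * x) = tB n N l * (tB n N k * x) := mul22 (c_tt h) x

/-- `t_k t_{k+1} s_k = t_k s_{k+1}` (with trailing factor). -/
lemma D1' {k} (h : 1 ≤ k ∧ k + 1 ≤ n - 1) (x : BrauerAlgebra n N) :
    tB n N k * (tB n N (k+1) * (sB n N k * x)) = tB n N k * (sB n N (k+1) * x) := by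
  calc tB n N k * (tB n N (k+1) * (sB n N k * x))
      = tB n N k * (tB n N (k+1) * (tB n N k * (sB n N (k+1) * x))) := by
        rw [tts' h]
    _ = tB n N k * (sB n N (k+1) * x) := ttt_lo' h _

/-- `s_{k+1} t_k t_{k+1} = s_k t_{k+1}` (with trailing factor). -/
lemma D2' {k} (h : 1 ≤ k ∧ k + 1 ≤ n - 1) (x : BrauerAlgebra n N) :
    sB n N (k+1) * (tB n N k * (tB n N (k+1) * x)) = sB n N k * (tB n N (k+1) * x) := by
  calc sB n N (k+1) * (tB n N k * (tB n N (k+1) * x))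
      = sB n N k * (tB n N (k+1) * (tB n N k * (tB n N (k+1) * x))) := (stt' h _).symm
    _ = sB n N k * (tB n N (k+1) * x) := by rw [ttt_hi' h]

/-- `t_k s_{k+1} s_k = t_k t_{k+1}`. -/
lemma E1' {k} (h : 1 ≤ k ∧ k + 1 ≤ n - 1) (x : BrauerAlgebra n N) :
    tB n N k * (sB n N (k+1) * (sB n N k * x)) = tB n N k * (tB n N (k+1) * x) := by
  calc tB n N k * (sB n N (k+1) * (sB n N k * x))
      = tB n N k * (tB n N (k+1) * (sB n N k * (sB n N k * x))) := (D1' h _).symm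
    _ = tB n N k * (tB n N (k+1) * x) := by rw [ss' ⟨h.1, by omega⟩]

/-- `t_{k+1} s_k s_{k+1} = t_{k+1} t_k`. -/
lemma E1'' {k} (h : 1 ≤ k ∧ k + 1 ≤ n - 1) (x : BrauerAlgebra n N) :
    tB n N (k+1) * (sB n N k * (sB n N (k+1) * x)) = tB n N (k+1) * (tB n N k * x) := by
  calc tB n N (k+1) * (sB n N k * (sB n N (k+1) * x))
      = tB n N (k+1) * (tB n N k * (sB n N (k+1) * (sB n N (k+1) * x))) := (tts' h _).symm
    _ = tB n N (k+1) * (tB n N k * x) := by rw [ss' ⟨by omega, h.2⟩]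

/-- `s_k s_{k+1} t_k = t_{k+1} t_k`. -/
lemma E2b' {k} (h : 1 ≤ k ∧ k + 1 ≤ n - 1) (x : BrauerAlgebra n N) :
    sB n N k * (sB n N (k+1) * (tB n N k * x)) = tB n N (k+1) * (tB n N k * x) := by
  calc sB n N k * (sB n N (k+1) * (tB n N k * x))
      = sB n N k * (sB n N k * (tB n N (k+1) * (tB n N k * x))) := by rw [stt' h]
    _ = tB n N (k+1) * (tB n N k * x) := ss' ⟨h.1, by omega⟩ _

/-- `s_{k+1} s_k t_{k+1} = t_k t_{k+1}`. -/
lemma E2c' {k} (h : 1 ≤ k ∧ k + 1 ≤ n - 1) (x : BrauerAlgebra n N) :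
    sB n N (k+1) * (sB n N k * (tB n N (k+1) * x)) = tB n N k * (tB n N (k+1) * x) := by
  calc sB n N (k+1) * (sB n N k * (tB n N (k+1) * x))
      = sB n N (k+1) * (sB n N (k+1) * (tB n N k * (tB n N (k+1) * x))) := by rw [D2' h]
    _ = tB n N k * (tB n N (k+1) * x) := ss' ⟨by omega, h.2⟩ _

/-- `s_k s_{k+1} t_k s_{k+1} = t_{k+1} s_k`. -/
lemma F' {k} (h : 1 ≤ k ∧ k + 1 ≤ n - 1) (x : BrauerAlgebra n N) :
    sB n N k * (sB n N (k+1) * (tB n N k * (sB n N (k+1) * x)))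
      = tB n N (k+1) * (sB n N k * x) := by
  calc sB n N k * (sB n N (k+1) * (tB n N k * (sB n N (k+1) * x)))
      = tB n N (k+1) * (tB n N k * (sB n N (k+1) * x)) := E2b' h _
    _ = tB n N (k+1) * (sB n N k * x) := tts' h _

/-- `s_{k+1} t_k s_{k+1} = s_k t_{k+1} s_k`. -/
lemma G' {k} (h : 1 ≤ k ∧ k + 1 ≤ n - 1) (x : BrauerAlgebra n N) :
    sB n N (k+1) * (tB n N k * (sB n N (k+1) * x))
      = sB n N k * (tB n N (k+1) * (sB n N k * x)) := by
  calc sB n N (k+1) * (tB n N k * (sB n N (k+1) * x))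
      = sB n N k * (sB n N k * (sB n N (k+1) * (tB n N k * (sB n N (k+1) * x)))) :=
        (ss' ⟨h.1, by omega⟩ _).symm
    _ = sB n N k * (tB n N (k+1) * (sB n N k * x)) := by rw [F' h]

lemma G_eq {k} (h : 1 ≤ k ∧ k + 1 ≤ n - 1) :
    sB n N (k+1) * tB n N k * sB n N (k+1) = sB n N k * tB n N (k+1) * sB n N k := by
  have := G' h (1 : BrauerAlgebra n N)
  simpa only [mul_one, mul_assoc] using this

end BrauerAux2

namespace BrauerAux3
open BrauerAux BrauerAux2

variable {n : ℕ} {N : ℂ}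

lemma sigmaB_triv {k l : ℕ} (h : l ≤ k + 1) : sigmaB n N k l = 1 := by
  rw [sigmaB]
  have : l - 1 - k = 0 := by omega
  rw [this]; simp

lemma sigmaBInv_triv {k l : ℕ} (h : l ≤ k + 1) : sigmaBInv n N k l = 1 := by
  rw [sigmaBInv]
  have : l - 1 - k = 0 := by omega
  rw [this]; simp

lemma sigmaB_succ {k l : ℕ} (h : k + 1 ≤ l) :
    sigmaB n N k (l + 1) = sB n N l * sigmaB n N k l := by
  rw [sigmaB, sigmaB]
  have h1 : l + 1 - 1 - k = (l - 1 - k) + 1 := by omega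
  rw [h1, List.range_succ_eq_map, List.map_cons, List.prod_cons, List.map_map]
  have h2 : List.map ((fun j => sB n N (l + 1 - 1 - j)) ∘ (· + 1)) (List.range (l - 1 - k))
      = List.map (fun j => sB n N (l - 1 - j)) (List.range (l - 1 - k)) := by
    apply List.map_congr_left
    intro j hj
    simp only [List.mem_range] at hj
    simp only [Function.comp_apply]
    have : l + 1 - 1 - (j + 1) = l - 1 - j := by omega
    rw [this]
  rw [h2]
  have h3 : l + 1 - 1 - 0 = l := by omega
  rw [h3]

lemma sigmaBInv_succ {k l : ℕ} (h : k + 1 ≤ l) :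
    sigmaBInv n N k (l + 1) = sigmaBInv n N k l * sB n N l := by
  rw [sigmaBInv, sigmaBInv]
  have h1 : l + 1 - 1 - k = (l - 1 - k) + 1 := by omega
  rw [h1, List.range_succ]
  simp only [List.map_append, List.prod_append, List.map_cons, List.map_nil,
    List.prod_cons, List.prod_nil, mul_one]
  have h2 : k + 1 + (l - 1 - k) = l := by omega
  rw [h2]

lemma sigmaB_peel {k l : ℕ} (h : k + 2 ≤ l) :
    sigmaB n N k l = sigmaB n N (k+1) l * sB n N (k+1) := by
  rw [sigmaB, sigmaB]
  have h1 : l - 1 - k = (l - 1 - (k+1)) + 1 := by omega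
  rw [h1, List.range_succ]
  simp only [List.map_append, List.prod_append, List.map_cons, List.map_nil,
    List.prod_cons, List.prod_nil, mul_one]
  have h2 : l - 1 - (l - 1 - (k + 1)) = k + 1 := by omega
  rw [h2]

lemma sigmaBInv_peel {k l : ℕ} (h : k + 2 ≤ l) :
    sigmaBInv n N k l = sB n N (k+1) * sigmaBInv n N (k+1) l := by
  rw [sigmaBInv, sigmaBInv]
  have h1 : l - 1 - k = (l - 1 - (k+1)) + 1 := by omega
  rw [h1, List.range_succ_eq_map, List.map_cons, List.prod_cons, List.map_map]
  have h2 : List.map ((fun j => sB n N (k + 1 + j)) ∘ (· + 1)) (List.range (l - 1 - (k + 1)))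
      = List.map (fun j => sB n N (k + 1 + 1 + j)) (List.range (l - 1 - (k + 1))) := by
    apply List.map_congr_left
    intro j hj
    simp only [Function.comp_apply]
    have : k + 1 + (j + 1) = k + 1 + 1 + j := by omega
    rw [this]
  rw [h2]

lemma transpB_base (k : ℕ) : transpB n N k (k+1) = sB n N k := by
  rw [transpB, sigmaB_triv (by omega), sigmaBInv_triv (by omega), one_mul, mul_one]

lemma ovB_base (k : ℕ) : ovB n N k (k+1) = tB n N k := by
  rw [ovB, sigmaB_triv (by omega), sigmaBInv_triv (by omega), one_mul, mul_one]

lemma transpB_succ {k l : ℕ} (h : k + 1 ≤ l) :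
    transpB n N k (l+1) = sB n N l * transpB n N k l * sB n N l := by
  rw [transpB, transpB, sigmaB_succ h, sigmaBInv_succ h]
  simp only [mul_assoc]

lemma ovB_succ {k l : ℕ} (h : k + 1 ≤ l) :
    ovB n N k (l+1) = sB n N l * ovB n N k l * sB n N l := by
  rw [ovB, ovB, sigmaB_succ h, sigmaBInv_succ h]
  simp only [mul_assoc]

lemma commute_sigmaB {k l : ℕ} (z : BrauerAlgebra n N)
    (h : ∀ j, k + 1 ≤ j → j < l → Commute z (sB n N j)) :
    Commute z (sigmaB n N k l) := by
  rw [sigmaB]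
  apply Commute.list_prod_right
  intro x hx
  simp only [List.mem_map, List.mem_range] at hx
  obtain ⟨j, hj, rfl⟩ := hx
  exact h (l - 1 - j) (by omega) (by omega)

lemma commute_sigmaBInv {k l : ℕ} (z : BrauerAlgebra n N)
    (h : ∀ j, k + 1 ≤ j → j < l → Commute z (sB n N j)) :
    Commute z (sigmaBInv n N k l) := by
  rw [sigmaBInv]
  apply Commute.list_prod_right
  intro x hx
  simp only [List.mem_map, List.mem_range] at hx
  obtain ⟨j, hj, rfl⟩ := hx
  exact h (k + 1 + j) (by omega) (by omega)

lemma commute_transpB {k l : ℕ} (z : BrauerAlgebra n N) (hkl : k < l)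
    (h : ∀ j, k ≤ j → j < l → Commute z (sB n N j)) :
    Commute z (transpB n N k l) := by
  rw [transpB]
  exact ((commute_sigmaB z (fun j h1 h2 => h j (by omega) h2)).mul_right
    (h k le_rfl hkl)).mul_right
    (commute_sigmaBInv z (fun j h1 h2 => h j (by omega) h2))

lemma commute_ovB {k l : ℕ} (z : BrauerAlgebra n N) (hkl : k < l)
    (h : ∀ j, k + 1 ≤ j → j < l → Commute z (sB n N j))
    (ht : Commute z (tB n N k)) :
    Commute z (ovB n N k l) := by
  rw [ovB]
  exact ((commute_sigmaB z h).mul_right ht).mul_right (commute_sigmaBInv z h)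

/-- Peel-the-bottom recursion: `(m,l) = s_m (m+1,l) s_m`. -/
lemma transpB_peel {m l : ℕ} (h1 : 1 ≤ m) (h2 : m + 2 ≤ l) (h3 : l ≤ n) :
    transpB n N m l = sB n N m * transpB n N (m+1) l * sB n N m := by
  have hb : 1 ≤ m ∧ m + 1 ≤ n - 1 := ⟨h1, by omega⟩
  have hc : Commute (sB n N m) (sigmaB n N (m+1) l) :=
    commute_sigmaB _ (fun j hj1 hj2 => (c_ss (by omega) : _))
  have hc' : Commute (sB n N m) (sigmaBInv n N (m+1) l) :=
    commute_sigmaBInv _ (fun j hj1 hj2 => (c_ss (by omega) : _))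
  rw [transpB, sigmaB_peel h2, sigmaBInv_peel h2]
  rw [transpB]
  calc sigmaB n N (m+1) l * sB n N (m+1) * sB n N m * (sB n N (m+1) * sigmaBInv n N (m+1) l)
      = sigmaB n N (m+1) l * (sB n N (m+1) * sB n N m * sB n N (m+1)) * sigmaBInv n N (m+1) l := by
        simp only [mul_assoc]
    _ = sigmaB n N (m+1) l * (sB n N m * sB n N (m+1) * sB n N m) * sigmaBInv n N (m+1) l := by
        rw [← braid hb]
    _ = sB n N m * (sigmaB n N (m+1) l * sB n N (m+1) * sigmaBInv n N (m+1) l) * sB n N m := by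
        rw [← mul_assoc, ← mul_assoc, ← hc.eq]
        simp only [mul_assoc]
        rw [hc'.eq]
  
/-- Peel-the-bottom recursion: `ov(m,l) = s_m ov(m+1,l) s_m`. -/
lemma ovB_peel {m l : ℕ} (h1 : 1 ≤ m) (h2 : m + 2 ≤ l) (h3 : l ≤ n) :
    ovB n N m l = sB n N m * ovB n N (m+1) l * sB n N m := by
  have hb : 1 ≤ m ∧ m + 1 ≤ n - 1 := ⟨h1, by omega⟩
  have hc : Commute (sB n N m) (sigmaB n N (m+1) l) :=
    commute_sigmaB _ (fun j hj1 hj2 => (c_ss (by omega) : _))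
  have hc' : Commute (sB n N m) (sigmaBInv n N (m+1) l) :=
    commute_sigmaBInv _ (fun j hj1 hj2 => (c_ss (by omega) : _))
  rw [ovB, sigmaB_peel h2, sigmaBInv_peel h2]
  rw [ovB]
  calc sigmaB n N (m+1) l * sB n N (m+1) * tB n N m * (sB n N (m+1) * sigmaBInv n N (m+1) l)
      = sigmaB n N (m+1) l * (sB n N (m+1) * tB n N m * sB n N (m+1)) * sigmaBInv n N (m+1) l := by
        simp only [mul_assoc]
    _ = sigmaB n N (m+1) l * (sB n N m * tB n N (m+1) * sB n N m) * sigmaBInv n N (m+1) l := by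
        rw [G_eq hb]
    _ = sB n N m * (sigmaB n N (m+1) l * tB n N (m+1) * sigmaBInv n N (m+1) l) * sB n N m := by
        rw [← mul_assoc, ← mul_assoc, ← hc.eq]
        simp only [mul_assoc]
        rw [hc'.eq]

end BrauerAux3

namespace BrauerAux4
open BrauerAux BrauerAux2 BrauerAux3

variable {n : ℕ} {N : ℂ}

lemma conjB {z a X Y : BrauerAlgebra n N} (h1 : z * a = a * z) (h2 : z * X = Y * z) :
    z * (a * X * a) = a * Y * a * z := by
  rw [← mul_assoc, ← mul_assoc, h1, mul_assoc a z X, h2, ← mul_assoc,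
    mul_assoc (a * Y) z a, h1, ← mul_assoc]

lemma conjC {z a X Y : BrauerAlgebra n N} (h1 : z * a = a * z) (h2 : z * X = z * Y) :
    z * (a * X * a) = z * (a * Y * a) := by
  rw [← mul_assoc, ← mul_assoc, h1, mul_assoc a z X, h2, ← mul_assoc a z Y, ← h1]
  simp only [mul_assoc]

/-- `s_k (m,k) = (m,k+1) s_k` for `m < k`. -/
lemma slide_t1 {m k : ℕ} (hm : m + 1 ≤ k) (hk : k ≤ n - 1) :
    sB n N k * transpB n N m k = transpB n N m (k+1) * sB n N k := by
  rw [transpB_succ hm, mul_assoc, ss ⟨by omega, hk⟩, mul_one]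

lemma slide_o1 {m k : ℕ} (hm : m + 1 ≤ k) (hk : k ≤ n - 1) :
    sB n N k * ovB n N m k = ovB n N m (k+1) * sB n N k := by
  rw [ovB_succ hm, mul_assoc, ss ⟨by omega, hk⟩, mul_one]

/-- `s_k (m,k+1) = (m,k) s_k` for `m < k`. -/
lemma slide_t2 {m k : ℕ} (hm : m + 1 ≤ k) (hk : k ≤ n - 1) :
    sB n N k * transpB n N m (k+1) = transpB n N m k * sB n N k := by
  rw [transpB_succ hm, ← mul_assoc, ← mul_assoc, ss ⟨by omega, hk⟩, one_mul]

lemma slide_o2 {m k : ℕ} (hm : m + 1 ≤ k) (hk : k ≤ n - 1) :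
    sB n N k * ovB n N m (k+1) = ovB n N m k * sB n N k := by
  rw [ovB_succ hm, ← mul_assoc, ← mul_assoc, ss ⟨by omega, hk⟩, one_mul]

/-- `s_k (k,l) = (k+1,l) s_k` for `k+1 < l`. -/
lemma slide_kk {k l : ℕ} (h1 : 1 ≤ k) (h2 : k + 2 ≤ l) (h3 : l ≤ n) :
    sB n N k * transpB n N k l = transpB n N (k+1) l * sB n N k := by
  revert h3
  induction l, h2 using Nat.le_induction with
  | base =>
    intro h3
    have hb : 1 ≤ k ∧ k + 1 ≤ n - 1 := ⟨h1, by omega⟩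
    rw [show k + 2 = (k+1)+1 from rfl, transpB_succ (by omega), transpB_base, transpB_base]
    simp only [mul_assoc]
    rw [braid' hb, ss ⟨by omega, hb.2⟩, mul_one]
  | succ l hl ih =>
    intro h3
    have hih := ih (by omega)
    have hc : sB n N k * sB n N l = sB n N l * sB n N k := c_ss (by omega)
    rw [transpB_succ (by omega : k + 1 ≤ l), transpB_succ (by omega : k + 1 + 1 ≤ l)]
    exact conjB hc hih

/-- `s_k ov(k,l) = ov(k+1,l) s_k` for `k+1 < l`. -/
lemma slide_kk_ov {k l : ℕ} (h1 : 1 ≤ k) (h2 : k + 2 ≤ l) (h3 : l ≤ n) :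
    sB n N k * ovB n N k l = ovB n N (k+1) l * sB n N k := by
  revert h3
  induction l, h2 using Nat.le_induction with
  | base =>
    intro h3
    have hb : 1 ≤ k ∧ k + 1 ≤ n - 1 := ⟨h1, by omega⟩
    rw [show k + 2 = (k+1)+1 from rfl, ovB_succ (by omega), ovB_base, ovB_base]
    simp only [mul_assoc]
    simpa only [mul_one] using F' hb 1
  | succ l hl ih =>
    intro h3
    have hih := ih (by omega)
    have hc : sB n N k * sB n N l = sB n N l * sB n N k := c_ss (by omega)
    rw [ovB_succ (by omega : k + 1 ≤ l), ovB_succ (by omega : k + 1 + 1 ≤ l)]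
    exact conjB hc hih

/-- `s_k (k+1,l) = (k,l) s_k` for `k+1 < l`. -/
lemma slide_kk' {k l : ℕ} (h1 : 1 ≤ k) (h2 : k + 2 ≤ l) (h3 : l ≤ n) :
    sB n N k * transpB n N (k+1) l = transpB n N k l * sB n N k := by
  have h4 := slide_kk (N := N) h1 h2 h3
  have hs : sB n N k * sB n N k = 1 := ss ⟨h1, by omega⟩
  calc sB n N k * transpB n N (k+1) l
      = sB n N k * (transpB n N (k+1) l * sB n N k) * sB n N k := by
        rw [mul_assoc, mul_assoc (transpB n N (k+1) l), hs, mul_one]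
    _ = sB n N k * (sB n N k * transpB n N k l) * sB n N k := by rw [← h4]
    _ = transpB n N k l * sB n N k := by simp only [← mul_assoc]; rw [hs, one_mul]

lemma slide_kk_ov' {k l : ℕ} (h1 : 1 ≤ k) (h2 : k + 2 ≤ l) (h3 : l ≤ n) :
    sB n N k * ovB n N (k+1) l = ovB n N k l * sB n N k := by
  have h4 := slide_kk_ov (N := N) h1 h2 h3
  have hs : sB n N k * sB n N k = 1 := ss ⟨h1, by omega⟩
  calc sB n N k * ovB n N (k+1) l
      = sB n N k * (ovB n N (k+1) l * sB n N k) * sB n N k := by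
        rw [mul_assoc, mul_assoc (ovB n N (k+1) l), hs, mul_one]
    _ = sB n N k * (sB n N k * ovB n N k l) * sB n N k := by rw [← h4]
    _ = ovB n N k l * sB n N k := by simp only [← mul_assoc]; rw [hs, one_mul]

/-- `t_k (k,l) = t_k ov(k+1,l)` for `k+1 < l`. -/
lemma T1 {k l : ℕ} (h1 : 1 ≤ k) (h2 : k + 2 ≤ l) (h3 : l ≤ n) :
    tB n N k * transpB n N k l = tB n N k * ovB n N (k+1) l := by
  revert h3
  induction l, h2 using Nat.le_induction with
  | base =>
    intro h3
    have hb : 1 ≤ k ∧ k + 1 ≤ n - 1 := ⟨h1, by omega⟩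
    rw [show k + 2 = (k+1)+1 from rfl, transpB_succ (by omega), transpB_base, ovB_base]
    simp only [mul_assoc]
    rw [E1' hb, ts ⟨by omega, hb.2⟩]
  | succ l hl ih =>
    intro h3
    have hih := ih (by omega)
    have hc : tB n N k * sB n N l = sB n N l * tB n N k := c_ts (by omega)
    rw [transpB_succ (by omega : k + 1 ≤ l), ovB_succ (by omega : k + 1 + 1 ≤ l)]
    exact conjC hc hih

/-- `t_k (k+1,l) = t_k ov(k,l)` for `k+1 < l`. -/
lemma T2 {k l : ℕ} (h1 : 1 ≤ k) (h2 : k + 2 ≤ l) (h3 : l ≤ n) :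
    tB n N k * transpB n N (k+1) l = tB n N k * ovB n N k l := by
  revert h3
  induction l, h2 using Nat.le_induction with
  | base =>
    intro h3
    have hb : 1 ≤ k ∧ k + 1 ≤ n - 1 := ⟨h1, by omega⟩
    rw [show k + 2 = (k+1)+1 from rfl, ovB_succ (by omega), transpB_base, ovB_base]
    symm
    simp only [mul_assoc]
    calc tB n N k * (sB n N (k+1) * (tB n N k * sB n N (k+1)))
        = tB n N k * (tB n N (k+1) * (sB n N k * (tB n N k * sB n N (k+1)))) :=
          (D1' hb _).symm
      _ = tB n N k * (tB n N (k+1) * (tB n N k * sB n N (k+1))) := by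
          rw [st' ⟨h1, by omega⟩]
      _ = tB n N k * sB n N (k+1) := ttt_lo' hb _
  | succ l hl ih =>
    intro h3
    have hih := ih (by omega)
    have hc : tB n N k * sB n N l = sB n N l * tB n N k := c_ts (by omega)
    rw [transpB_succ (by omega : k + 1 + 1 ≤ l), ovB_succ (by omega : k + 1 ≤ l)]
    exact conjC hc hih

/-- `t_k (m,k) = t_k ov(m,k+1)` for `m < k`. -/
lemma T3a {k m : ℕ} (h1 : 1 ≤ m) (h2 : m + 1 ≤ k) (h3 : k ≤ n - 1) :
    tB n N k * transpB n N m k = tB n N k * ovB n N m (k+1) := by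
  have key : ∀ d m, 1 ≤ m → m + 1 ≤ k → k - 1 - m = d →
      tB n N k * transpB n N m k = tB n N k * ovB n N m (k+1) := by
    intro d
    induction d with
    | zero =>
      intro m hm1 hm2 hm3
      have hk : k = m + 1 := by omega
      subst hk
      have hr : 1 ≤ m + 1 ∧ m + 1 ≤ n - 1 := ⟨by omega, h3⟩
      have hm : 1 ≤ m ∧ m + 1 ≤ n - 1 := ⟨hm1, h3⟩
      rw [transpB_base, ovB_succ (by omega : m + 1 ≤ m + 1), ovB_base]
      simp only [← mul_assoc]
      rw [ts hr, tts hm]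
    | succ d ih =>
      intro m hm1 hm2 hm3
      have hm2' : m + 2 ≤ k := by omega
      rw [transpB_peel hm1 hm2' (by omega : k ≤ n),
        ovB_peel hm1 (by omega : m + 2 ≤ k + 1) (by omega : k + 1 ≤ n)]
      have hc : tB n N k * sB n N m = sB n N m * tB n N k := c_ts (by omega)
      exact conjC hc (ih (m+1) (by omega) (by omega) (by omega))
  exact key _ m h1 h2 rfl

/-- `t_k (m,k+1) = t_k ov(m,k)` for `m < k`. -/
lemma T3b {k m : ℕ} (h1 : 1 ≤ m) (h2 : m + 1 ≤ k) (h3 : k ≤ n - 1) :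
    tB n N k * transpB n N m (k+1) = tB n N k * ovB n N m k := by
  have key : ∀ d m, 1 ≤ m → m + 1 ≤ k → k - 1 - m = d →
      tB n N k * transpB n N m (k+1) = tB n N k * ovB n N m k := by
    intro d
    induction d with
    | zero =>
      intro m hm1 hm2 hm3
      have hk : k = m + 1 := by omega
      subst hk
      have hr : 1 ≤ m + 1 ∧ m + 1 ≤ n - 1 := ⟨by omega, h3⟩
      have hm : 1 ≤ m ∧ m + 1 ≤ n - 1 := ⟨hm1, h3⟩
      rw [transpB_succ (by omega : m + 1 ≤ m + 1), transpB_base, ovB_base]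
      simp only [← mul_assoc]
      rw [ts hr]
      have := E1'' hm (1 : BrauerAlgebra n N)
      simp only [mul_one] at this
      simp only [mul_assoc]
      exact this
    | succ d ih =>
      intro m hm1 hm2 hm3
      have hm2' : m + 2 ≤ k := by omega
      rw [transpB_peel hm1 (by omega : m + 2 ≤ k + 1) (by omega : k + 1 ≤ n),
        ovB_peel hm1 hm2' (by omega : k ≤ n)]
      have hc : tB n N k * sB n N m = sB n N m * tB n N k := c_ts (by omega)
      exact conjC hc (ih (m+1) (by omega) (by omega) (by omega))
  exact key _ m h1 h2 rfl

end BrauerAux4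

namespace BrauerAux5
open BrauerAux BrauerAux2 BrauerAux3 BrauerAux4

variable {n : ℕ} {N : ℂ}

lemma Hs_base {m l : ℕ} (h1 : 1 ≤ m) (h2 : m + 3 ≤ l) (h3 : l ≤ n) :
    sB n N (m+1) * transpB n N m l = transpB n N m l * sB n N (m+1) := by
  revert h3
  induction l, h2 using Nat.le_induction with
  | base =>
    intro h3
    have hb : 1 ≤ m + 1 ∧ m + 1 + 1 ≤ n - 1 := ⟨by omega, by omega⟩
    have hbr : sB n N (m+2) * (sB n N (m+1) * sB n N (m+2))
        = sB n N (m+1) * (sB n N (m+2) * sB n N (m+1)) := by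
      have := braid (N := N) hb
      simp only [mul_assoc, show m + 1 + 1 = m + 2 from rfl] at this
      exact this.symm
    rw [show m + 3 = (m+2)+1 from rfl, transpB_succ (by omega : m + 1 ≤ m + 2),
      transpB_succ (le_refl (m+1)), transpB_base]
    simp only [mul_assoc, show m + 1 + 1 = m + 2 from rfl]
    rw [braid' hb]
    simp only [show m + 1 + 1 = m + 2 from rfl]
    rw [c_ss' (show m + 2 + 1 < m ∨ m + 1 < m + 2 by omega)]
    rw [hbr]
  | succ l hl ih =>
    intro h3
    have hih := ih (by omega)
    have hc : sB n N (m+1) * sB n N l = sB n N l * sB n N (m+1) := c_ss (by omega)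
    rw [transpB_succ (by omega : m + 1 ≤ l)]
    exact conjB hc hih

lemma Hs_ov_base {m l : ℕ} (h1 : 1 ≤ m) (h2 : m + 3 ≤ l) (h3 : l ≤ n) :
    sB n N (m+1) * ovB n N m l = ovB n N m l * sB n N (m+1) := by
  revert h3
  induction l, h2 using Nat.le_induction with
  | base =>
    intro h3
    have hb : 1 ≤ m + 1 ∧ m + 1 + 1 ≤ n - 1 := ⟨by omega, by omega⟩
    have hbr : sB n N (m+2) * (sB n N (m+1) * sB n N (m+2))
        = sB n N (m+1) * (sB n N (m+2) * sB n N (m+1)) := by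
      have := braid (N := N) hb
      simp only [mul_assoc, show m + 1 + 1 = m + 2 from rfl] at this
      exact this.symm
    rw [show m + 3 = (m+2)+1 from rfl, ovB_succ (by omega : m + 1 ≤ m + 2),
      ovB_succ (le_refl (m+1)), ovB_base]
    simp only [mul_assoc, show m + 1 + 1 = m + 2 from rfl]
    rw [braid' hb]
    simp only [show m + 1 + 1 = m + 2 from rfl]
    rw [c_st' (show m + 2 + 1 < m ∨ m + 1 < m + 2 by omega)]
    rw [hbr]
  | succ l hl ih =>
    intro h3
    have hih := ih (by omega)
    have hc : sB n N (m+1) * sB n N l = sB n N l * sB n N (m+1) := c_ss (by omega)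
    rw [ovB_succ (by omega : m + 1 ≤ l)]
    exact conjB hc hih

lemma Ht_base {m l : ℕ} (h1 : 1 ≤ m) (h2 : m + 3 ≤ l) (h3 : l ≤ n) :
    tB n N (m+1) * transpB n N m l = transpB n N m l * tB n N (m+1) := by
  revert h3
  induction l, h2 using Nat.le_induction with
  | base =>
    intro h3
    have hb : 1 ≤ m + 1 ∧ m + 1 + 1 ≤ n - 1 := ⟨by omega, by omega⟩
    have e1 : tB n N (m+2) * (sB n N (m+1) * sB n N (m+2)) = tB n N (m+2) * tB n N (m+1) := by
      simpa only [mul_one, show m + 1 + 1 = m + 2 from rfl] using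
        E1'' hb (1 : BrauerAlgebra n N)
    have e2 : sB n N (m+1) * (sB n N (m+2) * tB n N (m+1)) = tB n N (m+2) * tB n N (m+1) := by
      simpa only [mul_one, show m + 1 + 1 = m + 2 from rfl] using
        E2b' hb (1 : BrauerAlgebra n N)
    rw [show m + 3 = (m+2)+1 from rfl, transpB_succ (by omega : m + 1 ≤ m + 2),
      transpB_succ (le_refl (m+1)), transpB_base]
    simp only [mul_assoc]
    rw [E1' hb]
    simp only [show m + 1 + 1 = m + 2 from rfl]
    rw [c_ts' (show m + 2 + 1 < m ∨ m + 1 < m + 2 by omega)]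
    rw [e1, e2]
    rw [← c_ts' (show m + 2 + 1 < m ∨ m + 1 < m + 2 by omega)]
    rw [E2c' hb]
  | succ l hl ih =>
    intro h3
    have hih := ih (by omega)
    have hc : tB n N (m+1) * sB n N l = sB n N l * tB n N (m+1) := c_ts (by omega)
    rw [transpB_succ (by omega : m + 1 ≤ l)]
    exact conjB hc hih

lemma Ht_ov_base {m l : ℕ} (h1 : 1 ≤ m) (h2 : m + 3 ≤ l) (h3 : l ≤ n) :
    tB n N (m+1) * ovB n N m l = ovB n N m l * tB n N (m+1) := by
  revert h3
  induction l, h2 using Nat.le_induction with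
  | base =>
    intro h3
    have hb : 1 ≤ m + 1 ∧ m + 1 + 1 ≤ n - 1 := ⟨by omega, by omega⟩
    have e1 : tB n N (m+2) * (sB n N (m+1) * sB n N (m+2)) = tB n N (m+2) * tB n N (m+1) := by
      simpa only [mul_one, show m + 1 + 1 = m + 2 from rfl] using
        E1'' hb (1 : BrauerAlgebra n N)
    have e2 : sB n N (m+1) * (sB n N (m+2) * tB n N (m+1)) = tB n N (m+2) * tB n N (m+1) := by
      simpa only [mul_one, show m + 1 + 1 = m + 2 from rfl] using
        E2b' hb (1 : BrauerAlgebra n N)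
    rw [show m + 3 = (m+2)+1 from rfl, ovB_succ (by omega : m + 1 ≤ m + 2),
      ovB_succ (le_refl (m+1)), ovB_base]
    simp only [mul_assoc]
    rw [E1' hb]
    simp only [show m + 1 + 1 = m + 2 from rfl]
    rw [c_tt' (show m + 2 + 1 < m ∨ m + 1 < m + 2 by omega)]
    rw [e1, e2]
    rw [← c_tt' (show m + 2 + 1 < m ∨ m + 1 < m + 2 by omega)]
    rw [E2c' hb]
  | succ l hl ih =>
    intro h3
    have hih := ih (by omega)
    have hc : tB n N (m+1) * sB n N l = sB n N l * tB n N (m+1) := c_ts (by omega)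
    rw [ovB_succ (by omega : m + 1 ≤ l)]
    exact conjB hc hih

lemma Hs {K m l : ℕ} (h1 : 1 ≤ m) (h2 : m < K) (h3 : K + 2 ≤ l) (h4 : l ≤ n) :
    sB n N K * transpB n N m l = transpB n N m l * sB n N K := by
  have key : ∀ d m, 1 ≤ m → m < K → K - 1 - m = d →
      sB n N K * transpB n N m l = transpB n N m l * sB n N K := by
    intro d
    induction d with
    | zero =>
      intro m hm1 hm2 hm3
      have hK : K = m + 1 := by omega
      subst hK
      exact Hs_base hm1 (by omega) h4
    | succ d ih =>
      intro m hm1 hm2 hm3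
      rw [transpB_peel hm1 (by omega : m + 2 ≤ l) h4]
      have hc : sB n N K * sB n N m = sB n N m * sB n N K := c_ss (by omega)
      exact conjB hc (ih (m+1) (by omega) (by omega) (by omega))
  exact key _ m h1 h2 rfl

lemma Hs_ov {K m l : ℕ} (h1 : 1 ≤ m) (h2 : m < K) (h3 : K + 2 ≤ l) (h4 : l ≤ n) :
    sB n N K * ovB n N m l = ovB n N m l * sB n N K := by
  have key : ∀ d m, 1 ≤ m → m < K → K - 1 - m = d →
      sB n N K * ovB n N m l = ovB n N m l * sB n N K := by
    intro d
    induction d with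
    | zero =>
      intro m hm1 hm2 hm3
      have hK : K = m + 1 := by omega
      subst hK
      exact Hs_ov_base hm1 (by omega) h4
    | succ d ih =>
      intro m hm1 hm2 hm3
      rw [ovB_peel hm1 (by omega : m + 2 ≤ l) h4]
      have hc : sB n N K * sB n N m = sB n N m * sB n N K := c_ss (by omega)
      exact conjB hc (ih (m+1) (by omega) (by omega) (by omega))
  exact key _ m h1 h2 rfl

lemma Ht {K m l : ℕ} (h1 : 1 ≤ m) (h2 : m < K) (h3 : K + 2 ≤ l) (h4 : l ≤ n) :
    tB n N K * transpB n N m l = transpB n N m l * tB n N K := by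
  have key : ∀ d m, 1 ≤ m → m < K → K - 1 - m = d →
      tB n N K * transpB n N m l = transpB n N m l * tB n N K := by
    intro d
    induction d with
    | zero =>
      intro m hm1 hm2 hm3
      have hK : K = m + 1 := by omega
      subst hK
      exact Ht_base hm1 (by omega) h4
    | succ d ih =>
      intro m hm1 hm2 hm3
      rw [transpB_peel hm1 (by omega : m + 2 ≤ l) h4]
      have hc : tB n N K * sB n N m = sB n N m * tB n N K := c_ts (by omega)
      exact conjB hc (ih (m+1) (by omega) (by omega) (by omega))
  exact key _ m h1 h2 rfl

lemma Ht_ov {K m l : ℕ} (h1 : 1 ≤ m) (h2 : m < K) (h3 : K + 2 ≤ l) (h4 : l ≤ n) :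
    tB n N K * ovB n N m l = ovB n N m l * tB n N K := by
  have key : ∀ d m, 1 ≤ m → m < K → K - 1 - m = d →
      tB n N K * ovB n N m l = ovB n N m l * tB n N K := by
    intro d
    induction d with
    | zero =>
      intro m hm1 hm2 hm3
      have hK : K = m + 1 := by omega
      subst hK
      exact Ht_ov_base hm1 (by omega) h4
    | succ d ih =>
      intro m hm1 hm2 hm3
      rw [ovB_peel hm1 (by omega : m + 2 ≤ l) h4]
      have hc : tB n N K * sB n N m = sB n N m * tB n N K := c_ts (by omega)
      exact conjB hc (ih (m+1) (by omega) (by omega) (by omega))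
  exact key _ m h1 h2 rfl

end BrauerAux5

namespace BrauerPsi
open BrauerAux BrauerAux2 BrauerAux3 BrauerAux4 BrauerAux5 MulOpposite

def revHom (n : ℕ) (N : ℂ) : FreeAlgebra ℂ (BIdx n) →ₐ[ℂ] (BrauerAlgebra n N)ᵐᵒᵖ :=
  FreeAlgebra.lift ℂ (fun i => op (RingQuot.mkAlgHom ℂ (BrauerRel n N) (FreeAlgebra.ι ℂ i)))

variable {n : ℕ} {N : ℂ}

lemma revHom_bS (k : ℕ) : revHom n N (bS n k) = op (sB n N k) := by
  rw [sB, bS]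
  split_ifs with h
  · rw [revHom, FreeAlgebra.lift_ι_apply]
  · simp

lemma revHom_bT (k : ℕ) : revHom n N (bT n k) = op (tB n N k) := by
  rw [tB, bT]
  split_ifs with h
  · rw [revHom, FreeAlgebra.lift_ι_apply]
  · simp

lemma revHom_rel : ∀ ⦃a b⦄, BrauerRel n N a b → revHom n N a = revHom n N b := by
  intro a b h
  induction h with
  | s_sq k h =>
    simp only [map_mul, map_one, revHom_bS, ← op_mul, ← op_one]
    exact congrArg op (ss h)
  | t_sq k h =>
    simp only [map_mul, map_smul, revHom_bT, ← op_mul, ← op_smul]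
    exact congrArg op (tt h)
  | st k h =>
    simp only [map_mul, revHom_bS, revHom_bT, ← op_mul]
    exact congrArg op (ts h)
  | ts k h =>
    simp only [map_mul, revHom_bS, revHom_bT, ← op_mul]
    exact congrArg op (st h)
  | braid k h =>
    simp only [map_mul, revHom_bS, ← op_mul]
    exact congrArg op (by simpa only [mul_assoc] using braid (N := N) h)
  | ttt_lo k h =>
    simp only [map_mul, revHom_bT, ← op_mul]
    exact congrArg op (by simpa only [mul_assoc] using ttt_lo (N := N) h)
  | ttt_hi k h =>
    simp only [map_mul, revHom_bT, ← op_mul]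
    exact congrArg op (by simpa only [mul_assoc] using ttt_hi (N := N) h)
  | stt k h =>
    simp only [map_mul, revHom_bS, revHom_bT, ← op_mul]
    exact congrArg op (by simpa only [mul_one] using BrauerAux2.D1' (N := N) h 1)
  | tts k h =>
    simp only [map_mul, revHom_bS, revHom_bT, ← op_mul]
    exact congrArg op (by simpa only [mul_one] using BrauerAux2.D2' (N := N) h 1)
  | ss_comm k l h =>
    simp only [map_mul, revHom_bS, ← op_mul]
    exact congrArg op (c_ss h.2.2.2.2).symm
  | ts_comm k l h =>
    simp only [map_mul, revHom_bS, revHom_bT, ← op_mul]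
    exact congrArg op (c_ts h.2.2.2.2).symm
  | tt_comm k l h =>
    simp only [map_mul, revHom_bT, ← op_mul]
    exact congrArg op (c_tt h.2.2.2.2).symm

def psi (n : ℕ) (N : ℂ) : BrauerAlgebra n N →ₐ[ℂ] (BrauerAlgebra n N)ᵐᵒᵖ :=
  RingQuot.liftAlgHom ℂ ⟨revHom n N, revHom_rel⟩

lemma psi_mk (x : FreeAlgebra ℂ (BIdx n)) :
    psi n N (RingQuot.mkAlgHom ℂ (BrauerRel n N) x) = revHom n N x :=
  RingQuot.liftAlgHom_mkAlgHom_apply ℂ _ _ _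

lemma psi_s (k : ℕ) : psi n N (sB n N k) = op (sB n N k) := by
  rw [sB, psi_mk, revHom_bS, sB]

lemma psi_t (k : ℕ) : psi n N (tB n N k) = op (tB n N k) := by
  rw [tB, psi_mk, revHom_bT, tB]

lemma psi_sigmaB (k l : ℕ) : psi n N (sigmaB n N k l) = op (sigmaBInv n N k l) := by
  induction l with
  | zero => rw [sigmaB_triv (by omega), sigmaBInv_triv (by omega), map_one, op_one]
  | succ l ih =>
    by_cases h : k + 1 ≤ l
    · rw [sigmaB_succ h, sigmaBInv_succ h, map_mul, psi_s, ih, ← op_mul]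
    · rw [sigmaB_triv (by omega), sigmaBInv_triv (by omega), map_one, op_one]

lemma psi_sigmaBInv (k l : ℕ) : psi n N (sigmaBInv n N k l) = op (sigmaB n N k l) := by
  induction l with
  | zero => rw [sigmaB_triv (by omega), sigmaBInv_triv (by omega), map_one, op_one]
  | succ l ih =>
    by_cases h : k + 1 ≤ l
    · rw [sigmaB_succ h, sigmaBInv_succ h, map_mul, psi_s, ih, ← op_mul]
    · rw [sigmaB_triv (by omega), sigmaBInv_triv (by omega), map_one, op_one]

lemma psi_transpB (k l : ℕ) : psi n N (transpB n N k l) = op (transpB n N k l) := by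
  simp only [transpB, map_mul, psi_sigmaB, psi_s, psi_sigmaBInv, ← op_mul, mul_assoc]

lemma psi_ovB (k l : ℕ) : psi n N (ovB n N k l) = op (ovB n N k l) := by
  simp only [ovB, map_mul, psi_sigmaB, psi_t, psi_sigmaBInv, ← op_mul, mul_assoc]

lemma psi_xB (l : ℕ) : psi n N (xB n N l) = op (xB n N l) := by
  rw [xB, map_add, map_sum]
  rw [show (psi n N) (algebraMap ℂ (BrauerAlgebra n N) ((N - 1) / 2))
      = op (algebraMap ℂ (BrauerAlgebra n N) ((N - 1) / 2)) by
    rw [AlgHom.commutes, MulOpposite.algebraMap_apply]]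
  rw [MulOpposite.op_add, Finset.op_sum]
  congr 1
  apply Finset.sum_congr rfl
  intro m _
  rw [map_sub, psi_transpB, psi_ovB, MulOpposite.op_sub]

end BrauerPsi

namespace BrauerMain
open BrauerAux BrauerAux2 BrauerAux3 BrauerAux4 BrauerAux5 BrauerPsi MulOpposite

theorem jm (n : ℕ) (N : ℂ) :
    (∀ k l, 1 ≤ k → k ≤ n - 1 → 1 ≤ l → l ≤ n → l ≠ k → l ≠ k + 1 →
      sB n N k * xB n N l = xB n N l * sB n N k ∧
      tB n N k * xB n N l = xB n N l * tB n N k) ∧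
    (∀ k, 1 ≤ k → k ≤ n - 1 →
      sB n N k * xB n N k - xB n N (k + 1) * sB n N k = tB n N k - 1 ∧
      sB n N k * xB n N (k + 1) - xB n N k * sB n N k = 1 - tB n N k ∧
      tB n N k * (xB n N k + xB n N (k + 1)) = 0 ∧
      (xB n N k + xB n N (k + 1)) * tB n N k = 0) := by
  constructor
  · intro k l hk1 hk2 hl1 hl2 hlk hlk1
    rcases (show l < k ∨ k + 2 ≤ l by omega) with hc | hc
    · -- `l < k` : every letter occurring in `x_l` is far from `k`
      constructor
      · rw [xB]
        refine (Commute.add_right ?_ ?_).eq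
        · exact (Algebra.commutes ((N - 1) / 2) (sB n N k)).symm
        · refine Commute.sum_right _ _ _ fun m hm => ?_
          simp only [Finset.mem_range] at hm
          refine Commute.sub_right ?_ ?_
          · exact commute_transpB _ (by omega) (fun j hj1 hj2 => (c_ss (by omega) : _))
          · exact commute_ovB _ (by omega) (fun j hj1 hj2 => (c_ss (by omega) : _))
              ((c_st (by omega) : _))
      · rw [xB]
        refine (Commute.add_right ?_ ?_).eq
        · exact (Algebra.commutes ((N - 1) / 2) (tB n N k)).symm
        · refine Commute.sum_right _ _ _ fun m hm => ?_
          simp only [Finset.mem_range] at hm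
          refine Commute.sub_right ?_ ?_
          · exact commute_transpB _ (by omega) (fun j hj1 hj2 => (c_ts (by omega) : _))
          · exact commute_ovB _ (by omega) (fun j hj1 hj2 => (c_ts (by omega) : _))
              ((c_tt (by omega) : _))
    · -- `k + 1 < l`
      have hsub : ({k - 1, k} : Finset ℕ) ⊆ Finset.range (l - 1) := by
        intro x hx
        simp only [Finset.mem_insert, Finset.mem_singleton] at hx
        simp only [Finset.mem_range]
        omega
      have hnotmem : (k - 1) ∉ ({k} : Finset ℕ) := by
        simp only [Finset.mem_singleton]
        omega
      have ee : k - 1 + 1 = k := by omega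
      constructor
      · -- s-commutation
        have key : ∀ m ∈ Finset.range (l - 1), m ∉ ({k - 1, k} : Finset ℕ) →
            sB n N k * (transpB n N (m+1) l - ovB n N (m+1) l)
              - (transpB n N (m+1) l - ovB n N (m+1) l) * sB n N k = 0 := by
          intro m hm hm'
          simp only [Finset.mem_range] at hm
          simp only [Finset.mem_insert, Finset.mem_singleton] at hm'
          push_neg at hm'
          rw [sub_eq_zero]
          by_cases hmk : m + 1 < k
          · rw [mul_sub, sub_mul, Hs (by omega) hmk hc hl2, Hs_ov (by omega) hmk hc hl2]
          · have hmk2 : k + 2 ≤ m + 1 := by omega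
            have h1 : Commute (sB n N k) (transpB n N (m+1) l) :=
              commute_transpB _ (by omega) (fun j hj1 hj2 => (c_ss (by omega) : _))
            have h2 : Commute (sB n N k) (ovB n N (m+1) l) :=
              commute_ovB _ (by omega) (fun j hj1 hj2 => (c_ss (by omega) : _))
                ((c_st (by omega) : _))
            exact (h1.sub_right h2).eq
        rw [← sub_eq_zero]
        have expand : sB n N k * xB n N l - xB n N l * sB n N k
            = ∑ m ∈ Finset.range (l - 1),
                (sB n N k * (transpB n N (m+1) l - ovB n N (m+1) l)
                  - (transpB n N (m+1) l - ovB n N (m+1) l) * sB n N k) := by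
          rw [xB, mul_add, add_mul, Finset.mul_sum, Finset.sum_mul,
            Algebra.commutes ((N - 1) / 2) (sB n N k), Finset.sum_sub_distrib]
          abel
        rw [expand, ← Finset.sum_subset hsub key, Finset.sum_insert hnotmem,
          Finset.sum_singleton, ee, mul_sub, mul_sub, sub_mul, sub_mul,
          slide_kk hk1 hc hl2, slide_kk_ov hk1 hc hl2,
          slide_kk' hk1 hc hl2, slide_kk_ov' hk1 hc hl2]
        abel
      · -- t-commutation
        have key : ∀ m ∈ Finset.range (l - 1), m ∉ ({k - 1, k} : Finset ℕ) →
            tB n N k * (transpB n N (m+1) l - ovB n N (m+1) l)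
              - (transpB n N (m+1) l - ovB n N (m+1) l) * tB n N k = 0 := by
          intro m hm hm'
          simp only [Finset.mem_range] at hm
          simp only [Finset.mem_insert, Finset.mem_singleton] at hm'
          push_neg at hm'
          rw [sub_eq_zero]
          by_cases hmk : m + 1 < k
          · rw [mul_sub, sub_mul, Ht (by omega) hmk hc hl2, Ht_ov (by omega) hmk hc hl2]
          · have hmk2 : k + 2 ≤ m + 1 := by omega
            have h1 : Commute (tB n N k) (transpB n N (m+1) l) :=
              commute_transpB _ (by omega) (fun j hj1 hj2 => (c_ts (by omega) : _))
            have h2 : Commute (tB n N k) (ovB n N (m+1) l) :=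
              commute_ovB _ (by omega) (fun j hj1 hj2 => (c_ts (by omega) : _))
                ((c_tt (by omega) : _))
            exact (h1.sub_right h2).eq
        rw [← sub_eq_zero]
        have expand : tB n N k * xB n N l - xB n N l * tB n N k
            = ∑ m ∈ Finset.range (l - 1),
                (tB n N k * (transpB n N (m+1) l - ovB n N (m+1) l)
                  - (transpB n N (m+1) l - ovB n N (m+1) l) * tB n N k) := by
          rw [xB, mul_add, add_mul, Finset.mul_sum, Finset.sum_mul,
            Algebra.commutes ((N - 1) / 2) (tB n N k), Finset.sum_sub_distrib]
          abel
        have hL : tB n N k * (transpB n N k l - ovB n N k l)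
            + tB n N k * (transpB n N (k+1) l - ovB n N (k+1) l) = 0 := by
          rw [mul_sub, mul_sub, T1 hk1 hc hl2, T2 hk1 hc hl2]
          abel
        have hR : (transpB n N k l - ovB n N k l) * tB n N k
            + (transpB n N (k+1) l - ovB n N (k+1) l) * tB n N k = 0 := by
          have h0 := congrArg (psi n N) hL
          simp only [map_add, map_mul, map_sub, map_zero, psi_t, psi_transpB, psi_ovB,
            ← op_sub, ← op_mul, ← op_add] at h0
          rw [← op_zero] at h0
          exact op_injective h0
        rw [expand, ← Finset.sum_subset hsub key, Finset.sum_insert hnotmem,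
          Finset.sum_singleton, ee, sub_add_sub_comm, hL, hR, sub_zero]
  · intro k hk1 hk2
    obtain ⟨j, rfl⟩ : ∃ j, k = j + 1 := ⟨k - 1, by omega⟩
    have hkn : 1 ≤ j + 1 ∧ j + 1 ≤ n - 1 := ⟨by omega, hk2⟩
    have hss := ss (n := n) (N := N) hkn
    have hst := st (n := n) (N := N) hkn
    have hts := ts (n := n) (N := N) hkn
    have htt := tt (n := n) (N := N) hkn
    have hxk : xB n N (j+1) = algebraMap ℂ (BrauerAlgebra n N) ((N - 1) / 2)
        + ∑ m ∈ Finset.range j, (transpB n N (m+1) (j+1) - ovB n N (m+1) (j+1)) := by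
      rw [xB]
      rfl
    have hxk1 : xB n N (j+1+1) = algebraMap ℂ (BrauerAlgebra n N) ((N - 1) / 2)
        + (∑ m ∈ Finset.range j, (transpB n N (m+1) (j+1+1) - ovB n N (m+1) (j+1+1))
          + (sB n N (j+1) - tB n N (j+1))) := by
      rw [xB, show (j+1+1-1) = j + 1 from rfl, Finset.sum_range_succ, transpB_base, ovB_base]
    have eRsum : xB n N (j+1+1) * sB n N (j+1)
        = algebraMap ℂ (BrauerAlgebra n N) ((N - 1) / 2) * sB n N (j+1)
          + (∑ m ∈ Finset.range j,
            (transpB n N (m+1) (j+1+1) - ovB n N (m+1) (j+1+1)) * sB n N (j+1)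
            + (1 - tB n N (j+1))) := by
      rw [hxk1, add_mul, add_mul, Finset.sum_mul, sub_mul, hss, hts]
    have goal3 : tB n N (j+1) * (xB n N (j+1) + xB n N (j+1+1)) = 0 := by
      have hTsum : ∀ m ∈ Finset.range j,
          tB n N (j+1) * ((transpB n N (m+1) (j+1) - ovB n N (m+1) (j+1))
            + (transpB n N (m+1) (j+1+1) - ovB n N (m+1) (j+1+1))) = 0 := by
        intro m hm
        simp only [Finset.mem_range] at hm
        rw [mul_add, mul_sub, mul_sub,
          T3a (by omega) (by omega) hk2, T3b (by omega) (by omega) hk2]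
        abel
      have hsum0 : tB n N (j+1)
            * (∑ m ∈ Finset.range j, (transpB n N (m+1) (j+1) - ovB n N (m+1) (j+1)))
          + tB n N (j+1)
            * (∑ m ∈ Finset.range j, (transpB n N (m+1) (j+1+1) - ovB n N (m+1) (j+1+1)))
          = 0 := by
        rw [← mul_add, ← Finset.sum_add_distrib, Finset.mul_sum]
        exact Finset.sum_eq_zero hTsum
      have hc' : tB n N (j+1) * algebraMap ℂ (BrauerAlgebra n N) ((N - 1) / 2)
          = ((N - 1) / 2 : ℂ) • tB n N (j+1) := by
        rw [← Algebra.commutes, ← Algebra.smul_def]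
      rw [hxk, hxk1]
      calc tB n N (j+1) * ((algebraMap ℂ (BrauerAlgebra n N) ((N - 1) / 2)
              + ∑ m ∈ Finset.range j, (transpB n N (m+1) (j+1) - ovB n N (m+1) (j+1)))
            + (algebraMap ℂ (BrauerAlgebra n N) ((N - 1) / 2)
              + (∑ m ∈ Finset.range j,
                  (transpB n N (m+1) (j+1+1) - ovB n N (m+1) (j+1+1))
                + (sB n N (j+1) - tB n N (j+1)))))
          = tB n N (j+1) * algebraMap ℂ (BrauerAlgebra n N) ((N - 1) / 2)
            + tB n N (j+1) * algebraMap ℂ (BrauerAlgebra n N) ((N - 1) / 2)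
            + (tB n N (j+1)
                * (∑ m ∈ Finset.range j, (transpB n N (m+1) (j+1) - ovB n N (m+1) (j+1)))
              + tB n N (j+1)
                * (∑ m ∈ Finset.range j,
                    (transpB n N (m+1) (j+1+1) - ovB n N (m+1) (j+1+1))))
            + (tB n N (j+1) * sB n N (j+1) - tB n N (j+1) * tB n N (j+1)) := by
            simp only [mul_add, mul_sub]
            abel
        _ = 0 := by
            rw [hsum0, hts, htt, hc', add_zero]
            module
    refine ⟨?_, ?_, ?_, ?_⟩
    · -- s x_k - x_{k+1} s = t - 1
      have eL : sB n N (j+1) * xB n N (j+1)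
          = algebraMap ℂ (BrauerAlgebra n N) ((N - 1) / 2) * sB n N (j+1)
            + ∑ m ∈ Finset.range j,
              (transpB n N (m+1) (j+1+1) - ovB n N (m+1) (j+1+1)) * sB n N (j+1) := by
        rw [hxk, mul_add, Finset.mul_sum, ← Algebra.commutes]
        congr 1
        refine Finset.sum_congr rfl fun m hm => ?_
        simp only [Finset.mem_range] at hm
        rw [mul_sub, sub_mul, slide_t1 (by omega) hk2, slide_o1 (by omega) hk2]
      rw [eL, eRsum]
      abel
    · -- s x_{k+1} - x_k s = 1 - t
      have hsum2 : ∑ m ∈ Finset.range j,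
            sB n N (j+1) * (transpB n N (m+1) (j+1+1) - ovB n N (m+1) (j+1+1))
          = ∑ m ∈ Finset.range j,
            (transpB n N (m+1) (j+1) - ovB n N (m+1) (j+1)) * sB n N (j+1) := by
        refine Finset.sum_congr rfl fun m hm => ?_
        simp only [Finset.mem_range] at hm
        rw [mul_sub, sub_mul, slide_t2 (by omega) hk2, slide_o2 (by omega) hk2]
      have eL2 : sB n N (j+1) * xB n N (j+1+1)
          = algebraMap ℂ (BrauerAlgebra n N) ((N - 1) / 2) * sB n N (j+1)
            + (∑ m ∈ Finset.range j,
              (transpB n N (m+1) (j+1) - ovB n N (m+1) (j+1)) * sB n N (j+1)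
              + (1 - tB n N (j+1))) := by
        rw [hxk1, mul_add, mul_add, Finset.mul_sum, ← Algebra.commutes, hsum2,
          mul_sub, hss, hst]
      have eR2 : xB n N (j+1) * sB n N (j+1)
          = algebraMap ℂ (BrauerAlgebra n N) ((N - 1) / 2) * sB n N (j+1)
            + ∑ m ∈ Finset.range j,
              (transpB n N (m+1) (j+1) - ovB n N (m+1) (j+1)) * sB n N (j+1) := by
        rw [hxk, add_mul, Finset.sum_mul]
      rw [eL2, eR2]
      abel
    · exact goal3
    · have h0 := congrArg (psi n N) goal3
      simp only [map_mul, map_add, map_zero, psi_t, psi_xB, ← op_add, ← op_mul] at h0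
      rw [← op_zero] at h0
      exact op_injective h0

end BrauerMain

/-- The relations of Proposition 2.3 between the generators
of `B(n,N)` and the Jucys–Murphy elements. -/
theorem jucysMurphy_relations (n : ℕ) (N : ℂ) :
    (∀ k l, 1 ≤ k → k ≤ n - 1 → 1 ≤ l → l ≤ n → l ≠ k → l ≠ k + 1 →
      sB n N k * xB n N l = xB n N l * sB n N k ∧
      tB n N k * xB n N l = xB n N l * tB n N k) ∧
    (∀ k, 1 ≤ k → k ≤ n - 1 →
      sB n N k * xB n N k - xB n N (k + 1) * sB n N k = tB n N k - 1 ∧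
      sB n N k * xB n N (k + 1) - xB n N k * sB n N k = 1 - tB n N k ∧
      tB n N k * (xB n N k + xB n N (k + 1)) = 0 ∧
      (xB n N k + xB n N (k + 1)) * tB n N k = 0) :=
  BrauerMain.jm n N
end
end
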